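/- arXiv:2601.12997 — 9 statements merged into one kernel-verified Lean document; each statement's English description precedes it below -/
import Mathlib

section
/- Let X₁,…,X_M and Y₁,…,Y_N be independent random variables with X_i ~ N(0, σ_{X_i}²) and Y_j ~ N(0, σ_{Y_j}²), and set Z = (X₁⋯X_M)/(Y₁⋯Y_N), σ_M = σ_{X_1}⋯σ_{X_M}, s_N = σ_{Y_1}⋯σ_{Y_N}. Then for every r with -1 < r < 1, E[|Z|^r] = (2^{(M-N)r/2} σ_M^r / (π^{(M+N)/2} s_N^r)) · (Γ((r+1)/2))^M · (Γ((1-r)/2))^N. -/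
open MeasureTheory ProbabilityTheory Real Set
open scoped ENNReal NNReal

/-!
By independence the expectation of `|Z| ^ r = ∏ |Xᵢ| ^ r * ∏ |Yⱼ| ^ (-r)` factorises into
one-dimensional absolute moments `E |X| ^ s` of centred normal variables, with `s = r` for the
numerators and `s = -r` for the denominators; the restriction `-1 < r < 1` is exactly what makes
all of them finite. Folding the Gaussian density at `0` and substituting `t = x²` turns each into
a Gamma integral: `E |X| ^ s = (2σ²) ^ (s / 2) Γ((s + 1) / 2) / √π`.
-/

theorem integral_abs_rpow_gaussianReal {v : ℝ≥0} (hv : v ≠ 0) {r : ℝ} (hr : -1 < r) :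
    ∫ x, |x| ^ r ∂gaussianReal 0 v = (2 * v) ^ (r / 2) * Gamma ((r + 1) / 2) / √π := by
  have hv' : (0 : ℝ) < v := by positivity
  set b : ℝ := (2 * v)⁻¹
  calc ∫ x, |x| ^ r ∂gaussianReal 0 v
      = (√(2 * π * v))⁻¹ * ∫ x, (fun t ↦ t ^ r * exp (-b * t ^ (2 : ℝ))) |x| := by
        rw [integral_gaussianReal_eq_integral_smul hv, ← integral_const_mul]
        congr with x
        simp only [gaussianPDFReal, smul_eq_mul, rpow_two, sq_abs, b]
        ring_nf
    _ = (√(2 * π * v))⁻¹ * (2 * (b ^ (-(r + 1) / 2) * (1 / 2) * Gamma ((r + 1) / 2))) := by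
        rw [integral_comp_abs (f := fun t ↦ t ^ r * exp (-b * t ^ (2 : ℝ))),
          integral_rpow_mul_exp_neg_mul_rpow two_pos hr (by positivity)]
    _ = (2 * v) ^ (r / 2) * Gamma ((r + 1) / 2) / √π := by
        have hsqrt : √(2 * π * v) = (2 * v) ^ (1 / 2 : ℝ) * √π := by
          rw [sqrt_eq_rpow, sqrt_eq_rpow, ← mul_rpow (by positivity) pi_pos.le]
          ring_nf
        have hb : b ^ (-(r + 1) / 2) = (2 * v) ^ (r / 2) * (2 * v) ^ (1 / 2 : ℝ) := by
          rw [inv_rpow (by positivity), ← rpow_neg (by positivity), ← rpow_add (by positivity)]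
          ring_nf
        rw [hsqrt, hb]
        field_simp

theorem integral_abs_rpow_gaussianReal_sq {σ : ℝ} (hσ : 0 < σ) {r : ℝ} (hr : -1 < r) :
    ∫ x, |x| ^ r ∂gaussianReal 0 (σ ^ 2).toNNReal =
      σ ^ r * (2 ^ (r / 2) * Gamma ((r + 1) / 2) / √π) := by
  rw [integral_abs_rpow_gaussianReal (by simpa using hσ.ne') hr,
    coe_toNNReal _ (sq_nonneg σ), mul_rpow zero_le_two (sq_nonneg σ), ← rpow_natCast,
    ← rpow_mul hσ.le]
  ring_nf

theorem abs_prod_div_prod_rpow {ι κ : Type*} [Fintype ι] [Fintype κ] (a : ι → ℝ) (b : κ → ℝ)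
    (r : ℝ) : |(∏ i, a i) / ∏ j, b j| ^ r = (∏ i, |a i| ^ r) * ∏ j, |b j| ^ (-r) := by
  rw [abs_div, Finset.abs_prod, Finset.abs_prod, div_rpow (by positivity) (by positivity),
    div_eq_mul_inv, finsetProd_rpow _ _ fun _ _ ↦ abs_nonneg _,
    finsetProd_rpow _ _ fun _ _ ↦ abs_nonneg _, rpow_neg (by positivity)]

theorem prod_rpow_mul_const {ι : Type*} [Fintype ι] {σ : ι → ℝ} (hσ : ∀ i, 0 ≤ σ i) (r c : ℝ) :
    ∏ i, σ i ^ r * c = (∏ i, σ i) ^ r * c ^ Fintype.card ι := by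
  rw [Finset.prod_mul_distrib, finsetProd_rpow _ _ fun i _ ↦ hσ i, Finset.prod_const,
    Finset.card_univ]

theorem gaussian_moment_constants_mul {M N : ℕ} {P Q : ℝ} (hQ : 0 < Q) (r G₁ G₂ : ℝ) :
    P ^ r * (2 ^ (r / 2) * G₁ / √π) ^ M * (Q ^ (-r) * (2 ^ (-r / 2) * G₂ / √π) ^ N) =
      2 ^ ((M - N : ℝ) * r / 2) * P ^ r / (π ^ ((M + N : ℝ) / 2) * Q ^ r) * G₁ ^ M * G₂ ^ N := by
  have h2 : (2 : ℝ) ^ ((M - N : ℝ) * r / 2) = (2 ^ (r / 2)) ^ M * (2 ^ (-r / 2)) ^ N := by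
    rw [← rpow_mul_natCast, ← rpow_mul_natCast, ← rpow_add] <;> first | positivity | ring_nf
  have hπ : π ^ ((M + N : ℝ) / 2) = √π ^ M * √π ^ N := by
    rw [sqrt_eq_rpow, ← rpow_mul_natCast, ← rpow_mul_natCast, ← rpow_add]
      <;> first | positivity | ring_nf
  rw [h2, hπ, rpow_neg hQ.le, div_pow, div_pow, mul_pow, mul_pow]
  field_simp

theorem frac_moment_normal_product_ratio_general
    {Ω : Type*} [MeasureSpace Ω] [IsProbabilityMeasure (ℙ : Measure Ω)]
    (M N : ℕ) (σX : Fin M → ℝ) (σY : Fin N → ℝ)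
    (hσX : ∀ i, 0 < σX i) (hσY : ∀ j, 0 < σY j)
    (X : Fin M → Ω → ℝ) (Y : Fin N → Ω → ℝ)
    (hXlaw : ∀ i, Measure.map (X i) ℙ = gaussianReal 0 (Real.toNNReal ((σX i) ^ 2)))
    (hYlaw : ∀ j, Measure.map (Y j) ℙ = gaussianReal 0 (Real.toNNReal ((σY j) ^ 2)))
    (hindep : iIndepFun (Sum.elim X Y) ℙ)
    (r : ℝ) (hr₁ : -1 < r) (hr₂ : r < 1) :
    ∫ ω, |(∏ i, X i ω) / (∏ j, Y j ω)| ^ r ∂ℙ =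
      2 ^ ((M - N : ℝ) * r / 2) * (∏ i, σX i) ^ r /
        (Real.pi ^ ((M + N : ℝ) / 2) * (∏ j, σY j) ^ r) *
      (Real.Gamma ((r + 1) / 2)) ^ M * (Real.Gamma ((1 - r) / 2)) ^ N := by
  -- `Measure.map` along a map that is not a.e.-measurable is `0`, which no Gaussian law is.
  have hmeas : ∀ k, AEMeasurable (Sum.elim X Y k) ℙ := by
    rintro (i | j) <;> refine .of_map_ne_zero ?_
    · simpa [hXlaw] using IsProbabilityMeasure.ne_zero _
    · simpa [hYlaw] using IsProbabilityMeasure.ne_zero _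
  let e : Fin M ⊕ Fin N → ℝ := Sum.elim (fun _ ↦ r) (fun _ ↦ -r)
  calc ∫ ω, |(∏ i, X i ω) / (∏ j, Y j ω)| ^ r ∂ℙ
      = ∫ ω, ∏ k, |Sum.elim X Y k ω| ^ e k ∂ℙ := by
        simp only [abs_prod_div_prod_rpow, Fintype.prod_sum_type]
        rfl
    _ = ∏ k, ∫ x, |x| ^ e k ∂Measure.map (Sum.elim X Y k) ℙ := by
        rw [hindep.integral_fun_prod_comp hmeas
          fun k ↦ (measurable_abs.pow_const _).aestronglyMeasurable]
        congr with k
        rw [integral_map (hmeas k) (measurable_abs.pow_const _).aestronglyMeasurable]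
    _ = (∏ i, σX i ^ r * (2 ^ (r / 2) * Gamma ((r + 1) / 2) / √π)) *
          ∏ j, σY j ^ (-r) * (2 ^ (-r / 2) * Gamma ((-r + 1) / 2) / √π) := by
        simp only [Fintype.prod_sum_type, Sum.elim_inl, Sum.elim_inr, hXlaw, hYlaw, e,
          integral_abs_rpow_gaussianReal_sq (hσX _) hr₁,
          integral_abs_rpow_gaussianReal_sq (hσY _) (neg_lt_neg hr₂ : -1 < -r)]
    _ = _ := by
        rw [prod_rpow_mul_const (fun i ↦ (hσX i).le), prod_rpow_mul_const (fun j ↦ (hσY j).le),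
          Fintype.card_fin, Fintype.card_fin,
          gaussian_moment_constants_mul (Finset.prod_pos fun j _ ↦ hσY j), neg_add_eq_sub]

/-- Fractional absolute moments of the ratio of products of independent zero-mean
normal random variables. -/
theorem frac_moment_normal_product_ratio
    {Ω : Type*} [MeasureSpace Ω] [IsProbabilityMeasure (ℙ : Measure Ω)]
    (M N : ℕ) (σX : Fin M → ℝ) (σY : Fin N → ℝ)
    (hσX : ∀ i, 0 < σX i) (hσY : ∀ j, 0 < σY j)
    (X : Fin M → Ω → ℝ) (Y : Fin N → Ω → ℝ)
    (hX : ∀ i, Measurable (X i)) (hY : ∀ j, Measurable (Y j))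
    (hXlaw : ∀ i, Measure.map (X i) ℙ = gaussianReal 0 (Real.toNNReal ((σX i) ^ 2)))
    (hYlaw : ∀ j, Measure.map (Y j) ℙ = gaussianReal 0 (Real.toNNReal ((σY j) ^ 2)))
    (hindep : iIndepFun (Sum.elim X Y) ℙ)
    (r : ℝ) (hr₁ : -1 < r) (hr₂ : r < 1) :
    ∫ ω, |(∏ i, X i ω) / (∏ j, Y j ω)| ^ r ∂ℙ =
      2 ^ ((M - N : ℝ) * r / 2) * (∏ i, σX i) ^ r /
        (Real.pi ^ ((M + N : ℝ) / 2) * (∏ j, σY j) ^ r) *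
      (Real.Gamma ((r + 1) / 2)) ^ M * (Real.Gamma ((1 - r) / 2)) ^ N :=
  frac_moment_normal_product_ratio_general M N σX σY hσX hσY X Y hXlaw hYlaw hindep r hr₁ hr₂
end

section
/- Let X₁, X₂ be independent N(0, σ₁²) and N(0, σ₂²) random variables and set σ = σ₁σ₂. Then the product X₁X₂ has probability density function f(x) = (1/(π σ)) K₀(|x|/σ) for x ≠ 0, where K₀ is the modified Bessel function of the second kind of order 0. -/
open MeasureTheory ProbabilityTheory Real Set
open scoped ENNReal NNReal

/-- The modified Bessel function of the second kind of order 0,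
`K₀(x) = ∫_0^∞ exp(-x cosh t) dt`. -/
noncomputable def besselK0 (x : ℝ) : ℝ :=
  ∫ t in Set.Ioi (0 : ℝ), Real.exp (-(x * Real.cosh t))

/-!
Write `φᵢ` for the `N(0, σᵢ²)` density. Given `X₁ = x ≠ 0`, the product `x X₂` has density
`|x|⁻¹ φ₂(u / x)`, so `X₁ X₂` has density `u ↦ ∫ φ₁(x) φ₂(u / x) |x|⁻¹ dx`. The integrand is
even in `x`, and on `x > 0` the substitution `x = √(σ₁ |u| / σ₂) e^{t/2}` turns `dx / x` into
`dt / 2` and the exponent `x² / 2σ₁² + u² / 2σ₂²x²` into `(|u| / σ₁σ₂) cosh t`, which yields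
`K₀(|u| / σ₁σ₂)`.
-/

theorem lintegral_eq_two_mul_setLIntegral_Ioi_of_even {g : ℝ → ℝ≥0∞} (hg : ∀ x, g (-x) = g x) :
    ∫⁻ x, g x = 2 * ∫⁻ x in Ioi 0, g x := by
  have hIio : ∫⁻ x in Iio 0, g x = ∫⁻ x in Ioi 0, g x := by
    simpa [hg] using lintegral_image_eq_lintegral_abs_deriv_mul (s := Ioi 0) measurableSet_Ioi
      (f' := fun _ ↦ -1) (fun x _ ↦ (hasDerivAt_neg x).hasDerivWithinAt) neg_injective.injOn g
  rw [← lintegral_add_compl g measurableSet_Ioi, compl_Ioi, ← setLIntegral_congr Iio_ae_eq_Iic,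
    hIio, two_mul]

theorem setLIntegral_preimage_mul_left {x : ℝ} (hx : x ≠ 0) (f : ℝ → ℝ≥0∞) {s : Set ℝ}
    (hs : MeasurableSet s) :
    ∫⁻ y in (x * ·) ⁻¹' s, f y = ∫⁻ u in s, ENNReal.ofReal |x|⁻¹ * f (u / x) := by
  have himage : (· / x) '' s = (x * ·) ⁻¹' s := by
    ext y
    simp only [mem_image, mem_preimage]
    exact ⟨fun ⟨u, hu, hy⟩ ↦ by rwa [← hy, mul_div_cancel₀ _ hx], fun h ↦ ⟨_, h, by field_simp⟩⟩
  simpa [himage] using lintegral_image_eq_lintegral_abs_deriv_mul hs (f := (· / x))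
    (fun u _ ↦ ((hasDerivAt_id u).div_const x).hasDerivWithinAt)
    (fun _ _ _ _ h ↦ (div_left_inj' hx).mp h) f

theorem map_mul_prod_withDensity {μ : Measure ℝ} [SFinite μ] [NullSingletonClass μ]
    {f : ℝ → ℝ≥0∞} (hf : Measurable f) :
    (μ.prod (volume.withDensity f)).map (fun p ↦ p.1 * p.2) =
      volume.withDensity (fun u ↦ ∫⁻ x, ENNReal.ofReal |x|⁻¹ * f (u / x) ∂μ) := by
  ext s hs
  have hmul : Measurable fun p : ℝ × ℝ ↦ p.1 * p.2 := by fun_prop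
  rw [Measure.map_apply hmul hs, Measure.prod_apply (hmul hs), withDensity_apply _ hs,
    lintegral_lintegral_swap (by fun_prop)]
  refine lintegral_congr_ae ?_
  filter_upwards [Measure.ae_ne μ 0] with x hx
  exact (withDensity_apply _ (measurable_const_mul x hs)).trans
    (setLIntegral_preimage_mul_left hx f hs)

theorem integrableOn_exp_neg_mul_cosh {z : ℝ} (hz : 0 < z) :
    IntegrableOn (fun t ↦ exp (-(z * cosh t))) (Ioi 0) := by
  refine (exp_neg_integrableOn_Ioi 0 hz).mono' (by fun_prop) ?_
  filter_upwards [ae_restrict_mem measurableSet_Ioi] with t (ht : 0 < t)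
  rw [norm_of_nonneg (exp_pos _).le, exp_le_exp, neg_mul, neg_le_neg_iff]
  exact mul_le_mul_of_nonneg_left ((self_le_sinh_iff.2 ht.le).trans (sinh_lt_cosh t).le) hz.le

theorem besselK0_nonneg (z : ℝ) : 0 ≤ besselK0 z :=
  setIntegral_nonneg measurableSet_Ioi fun _ _ ↦ (exp_pos _).le

@[fun_prop]
theorem measurable_besselK0 : Measurable besselK0 :=
  (StronglyMeasurable.integral_prod_right' (ν := volume.restrict (Ioi 0))
    (f := fun p : ℝ × ℝ ↦ exp (-(p.1 * cosh p.2))) (by fun_prop)).measurable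

theorem lintegral_exp_neg_mul_cosh {z : ℝ} (hz : 0 < z) :
    ∫⁻ t, ENNReal.ofReal (exp (-(z * cosh t))) = 2 * ENNReal.ofReal (besselK0 z) := by
  rw [lintegral_eq_two_mul_setLIntegral_Ioi_of_even (by simp), besselK0,
    ofReal_integral_eq_lintegral_ofReal (integrableOn_exp_neg_mul_cosh hz)
      (ae_of_all _ fun _ ↦ (exp_pos _).le)]

section ProductOfGaussians

variable {σ₁ σ₂ : ℝ}

theorem gaussianPDFReal_mul_abs_inv_mul_gaussianPDFReal_div (hσ₁ : 0 < σ₁) (hσ₂ : 0 < σ₂)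
    (u x : ℝ) :
    gaussianPDFReal 0 (σ₁ ^ 2).toNNReal x * (|x|⁻¹ * gaussianPDFReal 0 (σ₂ ^ 2).toNNReal (u / x)) =
      (2 * π * (σ₁ * σ₂))⁻¹ *
        (|x|⁻¹ * exp (-(x ^ 2 / (2 * σ₁ ^ 2) + (u / x) ^ 2 / (2 * σ₂ ^ 2)))) := by
  have hsqrt : ∀ {σ : ℝ}, 0 < σ → √(2 * π * σ ^ 2) = √(2 * π) * σ := fun hσ ↦ by
    rw [sqrt_mul' _ (sq_nonneg _), sqrt_sq hσ.le]
  have hconst : 2 * π * (σ₁ * σ₂) = √(2 * π) * σ₁ * (√(2 * π) * σ₂) := by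
    rw [mul_mul_mul_comm (√(2 * π)), mul_self_sqrt (by positivity)]
  simp only [gaussianPDFReal, coe_toNNReal _ (sq_nonneg _), sub_zero, hsqrt hσ₁, hsqrt hσ₂,
    hconst, neg_add, exp_add, neg_div]
  ring

theorem lintegral_Ioi_abs_inv_mul_exp_eq_besselK0 (hσ₁ : 0 < σ₁) (hσ₂ : 0 < σ₂) {u : ℝ}
    (hu : u ≠ 0) :
    ∫⁻ x in Ioi 0,
        ENNReal.ofReal (|x|⁻¹ * exp (-(x ^ 2 / (2 * σ₁ ^ 2) + (u / x) ^ 2 / (2 * σ₂ ^ 2)))) =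
      ENNReal.ofReal (besselK0 (|u| / (σ₁ * σ₂))) := by
  set z := |u| / (σ₁ * σ₂) with hz_def
  have hz : 0 < z := by positivity
  set c := √(σ₁ * |u| / σ₂)
  have hc : 0 < c := sqrt_pos.2 (by positivity)
  have hc2 : c ^ 2 = σ₁ * |u| / σ₂ := sq_sqrt (by positivity)
  have himage : (fun t ↦ c * exp (t / 2)) '' univ = Ioi 0 := by
    refine image_univ.trans (Set.ext fun y ↦ ⟨?_, fun (hy : 0 < y) ↦ ⟨2 * log (y / c), ?_⟩⟩)
    · rintro ⟨t, rfl⟩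
      exact mul_pos hc (exp_pos _)
    · change c * exp (2 * log (y / c) / 2) = y
      rw [mul_div_cancel_left₀ _ two_ne_zero, exp_log (div_pos hy hc), mul_div_cancel₀ _ hc.ne']
  have hderiv : ∀ t, HasDerivAt (fun t ↦ c * exp (t / 2)) (c * exp (t / 2) / 2) t := fun t ↦
    (((hasDerivAt_id' t).div_const 2).exp.const_mul c).congr_deriv (by ring)
  have hexponent : ∀ t, (c * exp (t / 2)) ^ 2 / (2 * σ₁ ^ 2) +
      (u / (c * exp (t / 2))) ^ 2 / (2 * σ₂ ^ 2) = z * cosh t := fun t ↦ by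
    have hexp : exp (t / 2) ^ 2 = exp t := by rw [sq, ← exp_add, add_halves]
    rw [cosh_eq, exp_neg, div_pow, mul_pow, hexp, hc2, ← sq_abs u, hz_def]
    field_simp
  have hintegrand : ∀ t, ENNReal.ofReal |c * exp (t / 2) / 2| *
      ENNReal.ofReal (|c * exp (t / 2)|⁻¹ * exp (-((c * exp (t / 2)) ^ 2 / (2 * σ₁ ^ 2) +
        (u / (c * exp (t / 2))) ^ 2 / (2 * σ₂ ^ 2)))) =
      ENNReal.ofReal 2⁻¹ * ENNReal.ofReal (exp (-(z * cosh t))) := fun t ↦ by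
    have hx : 0 < c * exp (t / 2) := mul_pos hc (exp_pos _)
    rw [hexponent, ← ENNReal.ofReal_mul (by positivity), ← ENNReal.ofReal_mul (by positivity),
      abs_of_pos hx, abs_of_pos (half_pos hx)]
    congr 1
    field_simp
  rw [← himage, lintegral_image_eq_lintegral_abs_deriv_mul MeasurableSet.univ
      (fun t _ ↦ (hderiv t).hasDerivWithinAt) (fun s _ t _ h ↦ by simpa [hc.ne'] using h),
    Measure.restrict_univ]
  simp_rw [hintegrand]
  rw [lintegral_const_mul' _ _ ENNReal.ofReal_ne_top, lintegral_exp_neg_mul_cosh hz, ← mul_assoc,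
    ← ENNReal.ofReal_ofNat, ← ENNReal.ofReal_mul (by positivity)]
  norm_num

theorem lintegral_gaussianPDF_mul_abs_inv_mul_gaussianPDF_div (hσ₁ : 0 < σ₁) (hσ₂ : 0 < σ₂)
    {u : ℝ} (hu : u ≠ 0) :
    ∫⁻ x, gaussianPDF 0 (σ₁ ^ 2).toNNReal x *
        (ENNReal.ofReal |x|⁻¹ * gaussianPDF 0 (σ₂ ^ 2).toNNReal (u / x)) =
      ENNReal.ofReal (1 / (π * (σ₁ * σ₂)) * besselK0 (|u| / (σ₁ * σ₂))) := by
  have hintegrand : ∀ x, gaussianPDF 0 (σ₁ ^ 2).toNNReal x *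
        (ENNReal.ofReal |x|⁻¹ * gaussianPDF 0 (σ₂ ^ 2).toNNReal (u / x)) =
      ENNReal.ofReal (2 * π * (σ₁ * σ₂))⁻¹ *
        ENNReal.ofReal (|x|⁻¹ * exp (-(x ^ 2 / (2 * σ₁ ^ 2) + (u / x) ^ 2 / (2 * σ₂ ^ 2)))) :=
    fun x ↦ by
      simp only [gaussianPDF]
      rw [← ENNReal.ofReal_mul (inv_nonneg.2 (abs_nonneg x)),
        ← ENNReal.ofReal_mul (gaussianPDFReal_nonneg _ _ _), ← ENNReal.ofReal_mul (by positivity),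
        gaussianPDFReal_mul_abs_inv_mul_gaussianPDFReal_div hσ₁ hσ₂]
  simp_rw [hintegrand]
  rw [lintegral_const_mul' _ _ ENNReal.ofReal_ne_top,
    lintegral_eq_two_mul_setLIntegral_Ioi_of_even (fun x ↦ by simp [div_neg]),
    lintegral_Ioi_abs_inv_mul_exp_eq_besselK0 hσ₁ hσ₂ hu, ← mul_assoc, ← ENNReal.ofReal_ofNat,
    ← ENNReal.ofReal_mul (by positivity), ← ENNReal.ofReal_mul (by positivity)]
  congr 2
  field_simp

theorem map_mul_prod_gaussianReal (hσ₁ : 0 < σ₁) (hσ₂ : 0 < σ₂) :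
    ((gaussianReal 0 (σ₁ ^ 2).toNNReal).prod (gaussianReal 0 (σ₂ ^ 2).toNNReal)).map
        (fun p ↦ p.1 * p.2) =
      volume.withDensity fun u ↦
        ENNReal.ofReal (1 / (π * (σ₁ * σ₂)) * besselK0 (|u| / (σ₁ * σ₂))) := by
  have hvar : ∀ {σ : ℝ}, 0 < σ → (σ ^ 2).toNNReal ≠ 0 := fun hσ ↦
    (toNNReal_pos.2 (by positivity)).ne'
  have := nullSingletonClass_gaussianReal (μ := 0) (hvar hσ₁)
  rw [gaussianReal_of_var_ne_zero 0 (hvar hσ₂),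
    map_mul_prod_withDensity (measurable_gaussianPDF _ _)]
  refine withDensity_congr_ae ?_
  filter_upwards [Measure.ae_ne volume 0] with u hu
  rw [gaussianReal_of_var_ne_zero 0 (hvar hσ₁),
    lintegral_withDensity_eq_lintegral_mul _ (measurable_gaussianPDF _ _) (by fun_prop)]
  exact lintegral_gaussianPDF_mul_abs_inv_mul_gaussianPDF_div hσ₁ hσ₂ hu

end ProductOfGaussians

/-- The product of two independent zero-mean normals with standard deviations `σ₁, σ₂`
has density `x ↦ (1/(π σ₁ σ₂)) K₀(|x|/(σ₁σ₂))`. -/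
theorem pdf_product_two_normals
    {Ω : Type*} [MeasureSpace Ω] [IsProbabilityMeasure (ℙ : Measure Ω)]
    (σ₁ σ₂ : ℝ) (hσ₁ : 0 < σ₁) (hσ₂ : 0 < σ₂)
    (X₁ X₂ : Ω → ℝ) (hX₁ : Measurable X₁) (hX₂ : Measurable X₂)
    (hlaw₁ : Measure.map X₁ ℙ = gaussianReal 0 (Real.toNNReal (σ₁ ^ 2)))
    (hlaw₂ : Measure.map X₂ ℙ = gaussianReal 0 (Real.toNNReal (σ₂ ^ 2)))
    (hindep : IndepFun X₁ X₂ ℙ) :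
    ∀ a : ℝ, ℙ {ω | X₁ ω * X₂ ω ≤ a} =
      ENNReal.ofReal (∫ x in Set.Iic a, (1 / (Real.pi * (σ₁ * σ₂))) * besselK0 (|x| / (σ₁ * σ₂))) := by
  intro a
  have hlaw : Measure.map (fun ω ↦ X₁ ω * X₂ ω) ℙ = volume.withDensity fun u ↦
      ENNReal.ofReal (1 / (π * (σ₁ * σ₂)) * besselK0 (|u| / (σ₁ * σ₂))) := by
    rw [← map_mul_prod_gaussianReal hσ₁ hσ₂, ← hlaw₁, ← hlaw₂,
      ← (indepFun_iff_map_prod_eq_prod_map_map hX₁.aemeasurable hX₂.aemeasurable).mp hindep,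
      Measure.map_map (by fun_prop) (by fun_prop)]
    rfl
  have hprob : ℙ {ω | X₁ ω * X₂ ω ≤ a} = ∫⁻ u in Iic a,
      ENNReal.ofReal (1 / (π * (σ₁ * σ₂)) * besselK0 (|u| / (σ₁ * σ₂))) := by
    rw [← withDensity_apply _ measurableSet_Iic, ← hlaw,
      Measure.map_apply (by fun_prop) measurableSet_Iic]
    rfl
  rw [hprob, integral_eq_lintegral_of_nonneg_ae
      (ae_of_all _ fun u ↦ mul_nonneg (by positivity) (besselK0_nonneg _))
      (Measurable.aestronglyMeasurable (by fun_prop)),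
    ENNReal.ofReal_toReal (hprob ▸ measure_ne_top _ _)]
end

section
/- Let C₁, C₂ be independent standard Cauchy random variables. Then the product Z₂ = C₁C₂ has probability density function f(z) = 2 ln|z| / (π² (z² - 1)) for z ∉ {-1, 0, 1}. -/
/-!
Given `C₁ = x ≠ 0`, the event `C₁ C₂ ≤ a` is `C₂ ∈ (· / x) '' Iic a`, so a change of variables
gives `Z₂` the density `z ↦ ∫ p x * p (z / x) / |x| dx = π⁻² ∫ |x| / ((1 + x²) (x² + z²)) dx`,
where `p` is the Cauchy density.
With `c = z²`, the integrand `x / ((1 + x²) (x² + c))` has on `(0, ∞)` the primitive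
`(log (1 + x²) - log (x² + c)) / (2 (c - 1))`, which vanishes at infinity; this yields
`log (z²) / (π² (z² - 1))`.
-/

open MeasureTheory ProbabilityTheory Real Set Filter Topology
open scoped ENNReal

lemma map_eq_withDensity_of_measure_le_eq {Ω : Type*} [MeasurableSpace Ω] {μ : Measure Ω}
    [IsFiniteMeasure μ] {X : Ω → ℝ} (hX : Measurable X) {f : ℝ → ℝ} (hf : Integrable f)
    (hf₀ : 0 ≤ᵐ[volume] f) (h : ∀ a, μ {ω | X ω ≤ a} = ENNReal.ofReal (∫ x in Iic a, f x)) :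
    μ.map X = volume.withDensity fun x => ENNReal.ofReal (f x) := by
  have : IsFiniteMeasure (volume.withDensity fun x => ENNReal.ofReal (f x)) :=
    isFiniteMeasure_withDensity_ofReal hf.hasFiniteIntegral
  refine Measure.ext_of_Iic _ _ fun a => ?_
  rw [Measure.map_apply hX measurableSet_Iic, withDensity_apply _ measurableSet_Iic,
    ← ofReal_integral_eq_lintegral_ofReal hf.integrableOn (ae_restrict_of_ae hf₀)]
  exact h a

lemma cauchyPDFReal_zero_one (x : ℝ) : cauchyPDFReal 0 1 x = 1 / (π * (1 + x ^ 2)) := by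
  rw [cauchyPDFReal_def, one_div, mul_inv]
  push_cast
  ring

lemma map_eq_cauchyMeasure {Ω : Type*} [MeasurableSpace Ω] {μ : Measure Ω}
    [IsFiniteMeasure μ] {X : Ω → ℝ} (hX : Measurable X)
    (h : ∀ a, μ {ω | X ω ≤ a} = ENNReal.ofReal (∫ x in Iic a, 1 / (π * (1 + x ^ 2)))) :
    μ.map X = cauchyMeasure 0 1 := by
  simp_rw [← cauchyPDFReal_zero_one] at h
  rw [cauchyMeasure_of_scale_ne_zero 0 one_ne_zero]
  exact map_eq_withDensity_of_measure_le_eq hX (integrable_cauchyPDFReal 0)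
    (ae_of_all _ fun x => (cauchyPDF_pos 0 one_ne_zero x).le) h

lemma withDensity_setOf_mul_le {g : ℝ → ℝ≥0∞} {x : ℝ} (hx : x ≠ 0) (a : ℝ) :
    volume.withDensity g {y | x * y ≤ a} = ∫⁻ z in Iic a, ENNReal.ofReal |x⁻¹| * g (z / x) := by
  have himage : (· / x) '' Iic a = {y | x * y ≤ a} :=
    congrFun (image_eq_preimage_of_inverse (f := (· / x)) (g := (x * ·))
      (fun z => mul_div_cancel₀ z hx) (fun y => mul_div_cancel_left₀ y hx)) (Iic a)
  rw [withDensity_apply' _, ← himage, lintegral_image_eq_lintegral_abs_deriv_mul measurableSet_Iic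
    (fun z _ => ((hasDerivAt_id' z).div_const x).hasDerivWithinAt)
    (fun y _ z _ h => (div_left_inj' hx).1 h)]
  simp

lemma withDensity_prod_withDensity_setOf_mul_le {f g : ℝ → ℝ≥0∞} (hf : Measurable f)
    (hg : Measurable g) (a : ℝ) :
    (volume.withDensity f).prod (volume.withDensity g) {p | p.1 * p.2 ≤ a} =
      ∫⁻ z in Iic a, ∫⁻ x, f x * (ENNReal.ofReal |x⁻¹| * g (z / x)) := by
  have hS : MeasurableSet {p : ℝ × ℝ | p.1 * p.2 ≤ a} :=
    measurableSet_le (by fun_prop) (by fun_prop)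
  rw [Measure.prod_apply hS, lintegral_withDensity_eq_lintegral_mul _ hf
    (measurable_measure_prodMk_left hS), lintegral_lintegral_swap (by fun_prop)]
  refine lintegral_congr_ae ?_
  filter_upwards [Measure.ae_ne volume 0] with x hx
  rw [Pi.mul_apply, lintegral_const_mul _ (by fun_prop)]
  exact congrArg _ (withDensity_setOf_mul_le hx a)

lemma hasDerivAt_log_one_add_sq_sub_log_sq_add {c : ℝ} (hc : 0 < c) (x : ℝ) :
    HasDerivAt (fun x => log (1 + x ^ 2) - log (x ^ 2 + c))
      (2 * (c - 1) * (x / ((1 + x ^ 2) * (x ^ 2 + c)))) x := by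
  have h₁ : 1 + x ^ 2 ≠ 0 := by positivity
  have h₂ : x ^ 2 + c ≠ 0 := by positivity
  refine ((((hasDerivAt_pow 2 x).const_add 1).log h₁).sub
    (((hasDerivAt_pow 2 x).add_const c).log h₂)).congr_deriv ?_
  push_cast
  field_simp
  ring

lemma tendsto_log_one_add_sq_sub_log_sq_add {c : ℝ} (hc : 0 < c) :
    Tendsto (fun x : ℝ => log (1 + x ^ 2) - log (x ^ 2 + c)) atTop (𝓝 0) := by
  have hratio (x : ℝ) : log (1 + x ^ 2) - log (x ^ 2 + c) = log (1 + (1 - c) / (x ^ 2 + c)) := by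
    have : x ^ 2 + c ≠ 0 := by positivity
    rw [← log_div (by positivity) this]
    congr 1
    field_simp
    ring
  have hsmall : Tendsto (fun x : ℝ => (1 - c) / (x ^ 2 + c)) atTop (𝓝 0) :=
    tendsto_const_nhds.div_atTop
      (tendsto_atTop_add_const_right _ c (tendsto_pow_atTop two_ne_zero))
  have hlog :=
    (continuousAt_log one_ne_zero).tendsto.comp (add_zero (1 : ℝ) ▸ hsmall.const_add 1)
  simpa [hratio, Function.comp_def] using hlog

lemma integral_Ioi_div_one_add_sq_mul_sq_add {c : ℝ} (hc : 0 < c) (hc₁ : c ≠ 1) :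
    ∫ x in Ioi 0, x / ((1 + x ^ 2) * (x ^ 2 + c)) = log c / (2 * (c - 1)) := by
  have hc₁' : 2 * (c - 1) ≠ 0 := mul_ne_zero two_ne_zero (sub_ne_zero.2 hc₁)
  have hderiv (x : ℝ) (_ : x ∈ Ici 0) :=
    (hasDerivAt_log_one_add_sq_sub_log_sq_add hc x).div_const (2 * (c - 1))
  simp only [mul_div_cancel_left₀ _ hc₁'] at hderiv
  rw [integral_Ioi_of_hasDerivAt_of_nonneg' hderiv
    (fun x (hx : 0 < x) => by positivity)
    (by simpa using (tendsto_log_one_add_sq_sub_log_sq_add hc).div_const (2 * (c - 1)))]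
  rw [zero_pow two_ne_zero, add_zero, zero_add, log_one]
  ring

lemma integral_abs_div_one_add_sq_mul_sq_add {c : ℝ} (hc : 0 < c) (hc₁ : c ≠ 1) :
    ∫ x, |x| / ((1 + x ^ 2) * (x ^ 2 + c)) = log c / (c - 1) := by
  have := integral_comp_abs (f := fun x => x / ((1 + x ^ 2) * (x ^ 2 + c)))
  simp only [sq_abs] at this
  rw [this, integral_Ioi_div_one_add_sq_mul_sq_add hc hc₁]
  field_simp

lemma cauchyPDF_mul_abs_inv_mul_cauchyPDF_div (x z : ℝ) :
    cauchyPDF 0 1 x * (ENNReal.ofReal |x⁻¹| * cauchyPDF 0 1 (z / x)) =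
      ENNReal.ofReal ((π ^ 2)⁻¹ * (|x| / ((1 + x ^ 2) * (x ^ 2 + z ^ 2)))) := by
  simp only [cauchyPDF_def]
  rw [← ENNReal.ofReal_mul (abs_nonneg _),
    ← ENNReal.ofReal_mul (cauchyPDF_pos 0 one_ne_zero x).le]
  congr 1
  rcases eq_or_ne x 0 with rfl | hx
  · simp
  have : (0 : ℝ) < |x| := abs_pos.2 hx
  simp only [cauchyPDFReal_zero_one, abs_inv, div_pow]
  rw [← sq_abs x]
  field_simp

noncomputable def cauchyProductPDFReal (z : ℝ) : ℝ := 2 * log |z| / (π ^ 2 * (z ^ 2 - 1))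

lemma cauchyProductPDFReal_nonneg (z : ℝ) : 0 ≤ cauchyProductPDFReal z := by
  unfold cauchyProductPDFReal
  rcases le_total |z| 1 with h | h
  · have hz : z ^ 2 - 1 ≤ 0 := by nlinarith [sq_abs z, abs_nonneg z]
    exact div_nonneg_of_nonpos (by linarith [log_nonpos (abs_nonneg z) h])
      (mul_nonpos_of_nonneg_of_nonpos (by positivity) hz)
  · have hz : 0 ≤ z ^ 2 - 1 := by nlinarith [sq_abs z]
    have := log_nonneg h
    positivity

lemma measurable_cauchyProductPDFReal : Measurable cauchyProductPDFReal := by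
  unfold cauchyProductPDFReal
  fun_prop

lemma lintegral_cauchyPDF_mul_abs_inv_mul_cauchyPDF_div {z : ℝ}
    (hz : z ∉ ({-1, 0, 1} : Set ℝ)) :
    ∫⁻ x, cauchyPDF 0 1 x * (ENNReal.ofReal |x⁻¹| * cauchyPDF 0 1 (z / x)) =
      ENNReal.ofReal (cauchyProductPDFReal z) := by
  simp only [mem_insert_iff, mem_singleton_iff, not_or] at hz
  obtain ⟨hz_neg, hz_zero, hz_one⟩ := hz
  have hc : 0 < z ^ 2 := by positivity
  have hc₁ : z ^ 2 ≠ 1 := sq_ne_one_iff.2 ⟨hz_one, hz_neg⟩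
  have hint := integral_abs_div_one_add_sq_mul_sq_add hc hc₁
  -- `integral_comp_abs` holds without integrability, so the nonzero value certifies it.
  have hkernel : Integrable fun x : ℝ => |x| / ((1 + x ^ 2) * (x ^ 2 + z ^ 2)) :=
    .of_integral_ne_zero <|
      hint ▸ div_ne_zero (log_ne_zero_of_pos_of_ne_one hc hc₁) (sub_ne_zero.2 hc₁)
  simp_rw [cauchyPDF_mul_abs_inv_mul_cauchyPDF_div]
  rw [← ofReal_integral_eq_lintegral_ofReal (hkernel.const_mul _)
      (ae_of_all _ fun x => by positivity),
    integral_const_mul, hint, cauchyProductPDFReal, log_pow, log_abs]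
  push_cast
  field_simp

/-- The product of two independent standard Cauchy random variables has density
`z ↦ 2 ln|z| / (π² (z² − 1))`. -/
theorem pdf_product_two_cauchy
    {Ω : Type*} [MeasureSpace Ω] [IsProbabilityMeasure (ℙ : Measure Ω)]
    (C₁ C₂ : Ω → ℝ) (hC₁ : Measurable C₁) (hC₂ : Measurable C₂)
    (hlaw₁ : ∀ a : ℝ, ℙ {ω | C₁ ω ≤ a} =
      ENNReal.ofReal (∫ x in Set.Iic a, 1 / (Real.pi * (1 + x ^ 2))))
    (hlaw₂ : ∀ a : ℝ, ℙ {ω | C₂ ω ≤ a} =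
      ENNReal.ofReal (∫ x in Set.Iic a, 1 / (Real.pi * (1 + x ^ 2))))
    (hindep : IndepFun C₁ C₂ ℙ) :
    ∀ a : ℝ, ℙ {ω | C₁ ω * C₂ ω ≤ a} =
      ENNReal.ofReal (∫ z in Set.Iic a, 2 * Real.log |z| / (Real.pi ^ 2 * (z ^ 2 - 1))) := by
  intro a
  have hjoint :
      Measure.map (fun ω => (C₁ ω, C₂ ω)) ℙ = (cauchyMeasure 0 1).prod (cauchyMeasure 0 1) := by
    rw [(indepFun_iff_map_prod_eq_prod_map_map hC₁.aemeasurable hC₂.aemeasurable).1 hindep,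
      map_eq_cauchyMeasure hC₁ hlaw₁, map_eq_cauchyMeasure hC₂ hlaw₂]
  have hlintegral : ℙ {ω | C₁ ω * C₂ ω ≤ a} =
      ∫⁻ z in Iic a, ENNReal.ofReal (cauchyProductPDFReal z) := by
    have hS : MeasurableSet {p : ℝ × ℝ | p.1 * p.2 ≤ a} :=
      measurableSet_le (by fun_prop) (by fun_prop)
    change ℙ ((fun ω => (C₁ ω, C₂ ω)) ⁻¹' {p : ℝ × ℝ | p.1 * p.2 ≤ a}) = _
    rw [← Measure.map_apply (hC₁.prodMk hC₂) hS, hjoint,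
      cauchyMeasure_of_scale_ne_zero 0 one_ne_zero, withDensity_prod_withDensity_setOf_mul_le
        (measurable_cauchyPDF 0 1) (measurable_cauchyPDF 0 1)]
    refine lintegral_congr_ae (ae_restrict_of_ae ?_)
    filter_upwards [measure_eq_zero_iff_ae_notMem.1 ((toFinite {-1, 0, 1}).measure_zero volume)]
      with z hz using lintegral_cauchyPDF_mul_abs_inv_mul_cauchyPDF_div hz
  rw [hlintegral]
  change _ = ENNReal.ofReal (∫ z in Iic a, cauchyProductPDFReal z)
  rw [integral_eq_lintegral_of_nonneg_ae (ae_of_all _ cauchyProductPDFReal_nonneg)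
    measurable_cauchyProductPDFReal.aestronglyMeasurable,
    ENNReal.ofReal_toReal (hlintegral ▸ measure_ne_top _ _)]
end

section
/- The function f(z) = 2 ln|z| / (π² (z² − 1)) (with f(±1) := 1/π², f(0) := +∞ interpreted as an improper integrand) is a probability density: it is nonnegative on ℝ ∖ {0, ±1} and ∫_{-∞}^{∞} 2 ln|z|/(π²(z²−1)) dz = 1. -/
open MeasureTheory Real Set Filter Topology
open scoped ENNReal

/-!
The integrand is even, so it suffices to show `∫₀^∞ log t / (t² - 1) dt = π² / 4`. The
substitution `t ↦ 1/t` maps `(0, 1)` onto `(1, ∞)` and preserves `log t / (t² - 1) dt`, so both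
halves equal `∫₀¹ log t / (t² - 1) dt`. On `(0, 1)` expand `log t / (t² - 1) = ∑ₖ (-log t) t^(2k)`;
the moments `∫₀¹ (-log t) t^s dt = 1 / (s + 1)²` turn this into `∑ₖ 1 / (2k + 1)² = π² / 8`.
Every integrand is nonnegative, so all of this happens in `ℝ≥0∞`, where Tonelli needs no
integrability hypotheses.
-/

theorem hasSum_one_div_odd_sq : HasSum (fun k : ℕ => 1 / (2 * k + 1 : ℝ) ^ 2) (π ^ 2 / 8) := by
  set f : ℕ → ℝ := fun n => 1 / (n : ℝ) ^ 2
  have heven : HasSum (fun k => f (2 * k)) (π ^ 2 / 24) := by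
    have h := hasSum_zeta_two.mul_left (1 / 4)
    rw [show 1 / 4 * (π ^ 2 / 6) = π ^ 2 / 24 by ring] at h
    refine h.congr_fun fun k => ?_
    simp only [f]; push_cast; ring
  obtain ⟨b, hodd⟩ : Summable (fun k => f (2 * k + 1)) :=
    hasSum_zeta_two.summable.comp_injective fun a b h => by simpa using h
  obtain rfl : b = π ^ 2 / 8 := by
    have := hasSum_zeta_two.unique (heven.even_add_odd hodd)
    linarith
  simpa [f] using hodd

theorem hasDerivAt_neg_log_mul_rpow_antideriv {s x : ℝ} (hs : s + 1 ≠ 0) (hx : 0 < x) :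
    HasDerivAt (fun t => (t ^ (s + 1) - (s + 1) * (log t * t ^ (s + 1))) / (s + 1) ^ 2)
      (-log x * x ^ s) x := by
  have hpow : HasDerivAt (fun t => t ^ (s + 1)) ((s + 1) * x ^ s) x := by
    simpa using Real.hasDerivAt_rpow_const (p := s + 1) (Or.inl hx.ne')
  refine ((hpow.sub ((Real.hasDerivAt_log hx.ne').mul hpow |>.const_mul (s + 1))).div_const
    ((s + 1) ^ 2)).congr_deriv ?_
  rw [Real.rpow_add hx, Real.rpow_one]
  field_simp
  ring

theorem continuousOn_neg_log_mul_rpow_antideriv {s : ℝ} (hs : 0 < s + 1) :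
    ContinuousOn (fun t => (t ^ (s + 1) - (s + 1) * (log t * t ^ (s + 1))) / (s + 1) ^ 2)
      (Ici 0) := by
  intro x hx
  rcases (mem_Ici.mp hx).eq_or_lt with rfl | hx
  · have hpow : Tendsto (fun t : ℝ => t ^ (s + 1)) (𝓝[>] 0) (𝓝 0) := by
      simpa [Real.zero_rpow hs.ne'] using
        ((Real.continuousAt_rpow_const 0 (s + 1) (Or.inr hs.le)).tendsto).mono_left
          nhdsWithin_le_nhds
    rw [← continuousWithinAt_Ioi_iff_Ici, ContinuousWithinAt]
    simpa [Real.zero_rpow hs.ne'] using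
      (hpow.sub ((tendsto_log_mul_rpow_nhdsGT_zero hs).const_mul (s + 1))).div_const ((s + 1) ^ 2)
  · exact (hasDerivAt_neg_log_mul_rpow_antideriv hs.ne' hx).continuousAt.continuousWithinAt

theorem lintegral_neg_log_mul_rpow {s : ℝ} (hs : -1 < s) :
    ∫⁻ t in Ioo 0 1, ENNReal.ofReal (-log t * t ^ s) = ENNReal.ofReal (1 / (s + 1) ^ 2) := by
  have hs' : 0 < s + 1 := by linarith
  have hcont := (continuousOn_neg_log_mul_rpow_antideriv hs').mono
    (Icc_subset_Ici_self : Icc (0 : ℝ) 1 ⊆ _)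
  have hderiv : ∀ x ∈ Ioo (0 : ℝ) 1, HasDerivAt _ (-log x * x ^ s) x :=
    fun x hx => hasDerivAt_neg_log_mul_rpow_antideriv hs'.ne' hx.1
  have hnonneg : ∀ x ∈ Ioc (0 : ℝ) 1, 0 ≤ -log x * x ^ s := fun x hx =>
    mul_nonneg (neg_nonneg.2 (log_nonpos hx.1.le hx.2)) (rpow_nonneg hx.1.le s)
  have hint := intervalIntegral.integrableOn_deriv_of_nonneg hcont hderiv
    fun x hx => hnonneg x (Ioo_subset_Ioc_self hx)
  rw [setLIntegral_congr Ioo_ae_eq_Ioc, ← ofReal_integral_eq_lintegral_ofReal hint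
    ((ae_restrict_iff' measurableSet_Ioc).mpr (ae_of_all _ hnonneg)),
    ← intervalIntegral.integral_of_le zero_le_one,
    intervalIntegral.integral_eq_sub_of_hasDerivAt_of_le zero_le_one hcont hderiv
      ((intervalIntegrable_iff_integrableOn_Ioc_of_le zero_le_one).mpr hint)]
  simp [Real.zero_rpow hs'.ne']

theorem hasSum_neg_log_mul_pow_two_mul {t : ℝ} (ht : t ∈ Ioo (0 : ℝ) 1) :
    HasSum (fun k : ℕ => -log t * t ^ (2 * k)) (log t / (t ^ 2 - 1)) := by
  have ht2 : t ^ 2 < 1 := by nlinarith [ht.1, ht.2]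
  have h := (hasSum_geometric_of_lt_one (sq_nonneg t) ht2).mul_left (-log t)
  simp only [← pow_mul] at h
  rwa [← neg_sub 1, div_neg, ← neg_div, div_eq_mul_inv]

theorem lintegral_log_div_sq_sub_one_Ioo :
    ∫⁻ t in Ioo 0 1, ENNReal.ofReal (log t / (t ^ 2 - 1)) = ENNReal.ofReal (π ^ 2 / 8) := by
  have hterm_nonneg : ∀ k : ℕ, ∀ t ∈ Ioo (0 : ℝ) 1, 0 ≤ -log t * t ^ (2 * k) := fun k t ht =>
    mul_nonneg (neg_nonneg.2 (log_nonpos ht.1.le ht.2.le)) (pow_nonneg ht.1.le _)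
  calc ∫⁻ t in Ioo 0 1, ENNReal.ofReal (log t / (t ^ 2 - 1))
      = ∫⁻ t in Ioo 0 1, ∑' k : ℕ, ENNReal.ofReal (-log t * t ^ (2 * k)) := by
        refine setLIntegral_congr_fun measurableSet_Ioo fun t ht => ?_
        rw [← (hasSum_neg_log_mul_pow_two_mul ht).tsum_eq,
          ENNReal.ofReal_tsum_of_nonneg (hterm_nonneg · t ht)
            (hasSum_neg_log_mul_pow_two_mul ht).summable]
    _ = ∑' k : ℕ, ∫⁻ t in Ioo 0 1, ENNReal.ofReal (-log t * t ^ (2 * k)) :=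
        lintegral_tsum fun k => by fun_prop
    _ = ∑' k : ℕ, ENNReal.ofReal (1 / (2 * k + 1 : ℝ) ^ 2) := by
        congr! 2 with k
        have h := lintegral_neg_log_mul_rpow (s := ((2 * k : ℕ) : ℝ))
          (by linarith [(2 * k).cast_nonneg (α := ℝ)])
        simp only [Real.rpow_natCast] at h
        rw [h, Nat.cast_mul, Nat.cast_ofNat]
    _ = ENNReal.ofReal (π ^ 2 / 8) := by
        rw [← ENNReal.ofReal_tsum_of_nonneg (fun k => by positivity)
          hasSum_one_div_odd_sq.summable, hasSum_one_div_odd_sq.tsum_eq]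

theorem lintegral_Ioi_one_eq_lintegral_Ioo_comp_inv (f : ℝ → ℝ≥0∞) :
    ∫⁻ t in Ioi 1, f t = ∫⁻ t in Ioo 0 1, ENNReal.ofReal ((t ^ 2)⁻¹) * f t⁻¹ := by
  have himage : Inv.inv '' Ioo (0 : ℝ) 1 = Ioi 1 := by
    rw [Set.image_inv_eq_inv, Set.inv_Ioo_0_left one_pos, inv_one]
  rw [← himage, lintegral_image_eq_lintegral_abs_deriv_mul measurableSet_Ioo
    (fun t ht => (hasDerivAt_inv ht.1.ne').hasDerivWithinAt) inv_injective.injOn]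
  refine setLIntegral_congr_fun measurableSet_Ioo fun t _ => ?_
  rw [abs_neg, abs_of_nonneg (inv_nonneg.mpr (sq_nonneg t))]

theorem lintegral_log_div_sq_sub_one_Ioi :
    ∫⁻ t in Ioi 0, ENNReal.ofReal (log t / (t ^ 2 - 1)) = ENNReal.ofReal (π ^ 2 / 4) := by
  have hinv : ∫⁻ t in Ioi 1, ENNReal.ofReal (log t / (t ^ 2 - 1))
      = ∫⁻ t in Ioo 0 1, ENNReal.ofReal (log t / (t ^ 2 - 1)) := by
    rw [lintegral_Ioi_one_eq_lintegral_Ioo_comp_inv]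
    refine setLIntegral_congr_fun measurableSet_Ioo fun t ht => ?_
    have ht0 : t ≠ 0 := ht.1.ne'
    have ht2 : 1 - t ^ 2 ≠ 0 := by nlinarith [ht.1, ht.2]
    rw [← ENNReal.ofReal_mul (inv_nonneg.mpr (sq_nonneg t)), log_inv]
    congr 1
    field_simp
    rw [← neg_sub 1, div_neg, mul_div_cancel_right₀ _ ht2]
  rw [← Ioo_union_Ici_eq_Ioi one_pos,
    lintegral_union measurableSet_Ici ((Iio_disjoint_Ici le_rfl).mono_left Ioo_subset_Iio_self),
    setLIntegral_congr Ioi_ae_eq_Ici.symm, hinv, lintegral_log_div_sq_sub_one_Ioo,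
    ← ENNReal.ofReal_add (by positivity) (by positivity)]
  congr 1
  ring

theorem log_div_sq_sub_one_nonneg (x : ℝ) : 0 ≤ log x / (x ^ 2 - 1) := by
  rw [← log_abs, ← sq_abs]
  rcases le_total |x| 1 with hx | hx
  · exact div_nonneg_of_nonpos (log_nonpos (abs_nonneg x) hx)
      (by nlinarith [abs_nonneg x])
  · exact div_nonneg (log_nonneg hx) (by nlinarith)

/-- The function `z ↦ 2 ln|z| / (π² (z² − 1))` is nonnegative away from `{0, 1, -1}`
and integrates to `1` over the real line. -/
theorem cauchy_product_density_is_pdf :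
    (∀ z : ℝ, z ≠ 0 → z ≠ 1 → z ≠ -1 →
      0 ≤ 2 * Real.log |z| / (Real.pi ^ 2 * (z ^ 2 - 1))) ∧
    ∫ z : ℝ, 2 * Real.log |z| / (Real.pi ^ 2 * (z ^ 2 - 1)) = 1 := by
  have hdensity : ∀ z : ℝ, 2 * log |z| / (π ^ 2 * (z ^ 2 - 1))
      = 2 / π ^ 2 * (log |z| / (|z| ^ 2 - 1)) := fun z => by
    rw [sq_abs, div_mul_div_comm]
  refine ⟨fun z _ _ _ => ?_, ?_⟩
  · rw [hdensity]
    exact mul_nonneg (by positivity) (log_div_sq_sub_one_nonneg _)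
  · simp_rw [hdensity]
    rw [integral_comp_abs (f := fun t => 2 / π ^ 2 * (log t / (t ^ 2 - 1))), integral_const_mul,
      integral_eq_lintegral_of_nonneg_ae (ae_of_all _ log_div_sq_sub_one_nonneg)
        (by measurability : Measurable _).aestronglyMeasurable,
      lintegral_log_div_sq_sub_one_Ioi, ENNReal.toReal_ofReal (by positivity)]
    field_simp
    norm_num
end

section
/- The function f(z) = (4 ln²|z| + π²) / (2π³ (z² + 1)) is a probability density function on ℝ, i.e., f ≥ 0 and ∫_{-∞}^{∞} (4 ln²|z| + π²)/(2π³(z²+1)) dz = 1. -/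
/-!
Split the density as `(2/π³) log²x/(x²+1) + (1/2π) (1+x²)⁻¹`; the second part integrates to `1/2`
by `arctan`, so everything reduces to `∫₀^∞ log²x/(x²+1) dx = π³/8`. The substitution `x ↦ 1/x`
preserves `log²x dx/(x²+1)` and swaps `(0,1)` with `(1,∞)`. On `(1,∞)` expand
`1/(x²+1) = Σ (-1)ᵏ x^(-2k-2)` and integrate termwise using `∫₁^∞ log²x · x^(-m-1) dx = 2/m³`:
this gives `2 Σ (-1)ᵏ/(2k+1)³ = 2 · π³/32`, the value at `3` of the `L`-function of the
nontrivial character mod `4`.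
-/

open MeasureTheory Real Set Filter Topology

theorem hasSum_neg_one_pow_div_odd_cube :
    HasSum (fun k : ℕ => (-1 : ℝ) ^ k / (2 * k + 1) ^ 3) (π ^ 3 / 32) := by
  have hodd : Function.Injective (fun k : ℕ => 2 * k + 1) := fun a b h => by simpa using h
  have hzero : ∀ n ∉ range (fun k : ℕ => 2 * k + 1), 1 / (n : ℝ) ^ 3 * sin (π * n / 2) = 0 := by
    intro n hn
    obtain ⟨k, rfl⟩ : Even n := Nat.not_odd_iff_even.mp fun ⟨j, hj⟩ => hn ⟨j, hj.symm⟩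
    rw [show π * ((k + k : ℕ) : ℝ) / 2 = k * π by push_cast; ring, sin_nat_mul_pi, mul_zero]
  refine ((hodd.hasSum_iff hzero).mpr hasSum_L_function_mod_four_eval_three).congr_fun fun k => ?_
  rw [Function.comp_apply, show π * ((2 * k + 1 : ℕ) : ℝ) / 2 = π / 2 + k * π by push_cast; ring,
    sin_add_nat_mul_pi, sin_pi_div_two]
  push_cast
  ring

section LogSqDivPow

variable {m : ℕ}

theorem tendsto_pow_log_div_pow_atTop (k : ℕ) (hm : m ≠ 0) :
    Tendsto (fun x => log x ^ k / x ^ m) atTop (𝓝 0) := by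
  have := (isLittleO_log_rpow_rpow_atTop k (s := m) (by positivity)).tendsto_div_nhds_zero
  refine this.congr' ?_
  filter_upwards [eventually_gt_atTop 0] with x hx
  rw [rpow_natCast, rpow_natCast]

theorem hasDerivAt_log_sq_div_pow_antideriv (hm : m ≠ 0) {x : ℝ} (hx : 0 < x) :
    HasDerivAt (fun x => -((m * log x) ^ 2 + 2 * (m * log x) + 2) / (m ^ 3 * x ^ m))
      (log x ^ 2 / x ^ (m + 1)) x := by
  have hL : HasDerivAt (fun y => m * log y) (m / x) x := by
    simpa [div_eq_mul_inv] using (hasDerivAt_log hx.ne').const_mul (m : ℝ)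
  have hnum : HasDerivAt (fun y => -((m * log y) ^ 2 + 2 * (m * log y) + 2))
      (-(2 * (m * log x) * (m / x) + 2 * (m / x))) x :=
    (((hL.pow 2).add (hL.const_mul 2)).add_const 2).neg.congr_deriv (by ring)
  have hden : HasDerivAt (fun y => (m : ℝ) ^ 3 * y ^ m) (m ^ 3 * (m * x ^ (m - 1))) x :=
    (hasDerivAt_pow m x).const_mul _
  refine (hnum.div hden (by positivity)).congr_deriv ?_
  obtain ⟨n, rfl⟩ := Nat.exists_eq_add_one_of_ne_zero hm
  rw [Nat.add_sub_cancel]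
  field_simp
  ring

theorem tendsto_log_sq_div_pow_antideriv_atTop (hm : m ≠ 0) :
    Tendsto (fun x => -((m * log x) ^ 2 + 2 * (m * log x) + 2) / (m ^ 3 * x ^ m)) atTop (𝓝 0) := by
  have h := ((((tendsto_pow_log_div_pow_atTop 2 hm).const_mul ((m : ℝ) ^ 2)).add
    (((tendsto_pow_log_div_pow_atTop 1 hm).const_mul (2 * (m : ℝ))).add
      ((tendsto_pow_log_div_pow_atTop 0 hm).const_mul 2))).div_const ((m : ℝ) ^ 3)).neg
  simp only [mul_zero, add_zero, zero_div, neg_zero] at h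
  refine h.congr fun x => ?_
  ring

theorem integrableOn_Ioi_one_log_sq_div_pow (hm : m ≠ 0) :
    IntegrableOn (fun x => log x ^ 2 / x ^ (m + 1)) (Ioi 1) :=
  integrableOn_Ioi_deriv_of_nonneg'
    (fun _ hx => hasDerivAt_log_sq_div_pow_antideriv hm (one_pos.trans_le hx))
    (fun _ hx => div_nonneg (sq_nonneg _) (pow_nonneg (one_pos.trans hx).le _))
    (tendsto_log_sq_div_pow_antideriv_atTop hm)

theorem integral_Ioi_one_log_sq_div_pow (hm : m ≠ 0) :
    ∫ x in Ioi 1, log x ^ 2 / x ^ (m + 1) = 2 / m ^ 3 := by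
  rw [integral_Ioi_of_hasDerivAt_of_nonneg'
    (fun _ hx => hasDerivAt_log_sq_div_pow_antideriv hm (one_pos.trans_le hx))
    (fun _ hx => div_nonneg (sq_nonneg _) (pow_nonneg (one_pos.trans hx).le _))
    (tendsto_log_sq_div_pow_antideriv_atTop hm)]
  simp [neg_div]

end LogSqDivPow

theorem hasSum_neg_one_pow_div_pow_two_mul_add_two {x : ℝ} (hx : 1 < |x|) :
    HasSum (fun k : ℕ => (-1 : ℝ) ^ k / x ^ (2 * k + 2)) (x ^ 2 + 1)⁻¹ := by
  have hx2 : x ^ 2 ≠ 0 := pow_ne_zero 2 (abs_pos.mp (one_pos.trans hx))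
  have hr : |-(x ^ 2)⁻¹| < 1 := by
    rw [abs_neg, abs_inv, abs_pow]
    exact inv_lt_one_of_one_lt₀ (one_lt_pow₀ hx two_ne_zero)
  have h := (hasSum_geometric_of_abs_lt_one hr).mul_left (x ^ 2)⁻¹
  rw [sub_neg_eq_add, ← mul_inv, mul_add, mul_one, mul_inv_cancel₀ hx2] at h
  refine h.congr_fun fun k => ?_
  rw [neg_pow (x ^ 2)⁻¹, inv_pow, ← pow_mul, pow_add]
  ring

theorem integrableOn_Ioi_one_log_sq_div_sq_add_one :
    IntegrableOn (fun x => log x ^ 2 / (x ^ 2 + 1)) (Ioi 1) := by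
  refine (integrableOn_Ioi_one_log_sq_div_pow one_ne_zero).mono'
    (Measurable.aestronglyMeasurable (by fun_prop)) ?_
  filter_upwards [ae_restrict_mem measurableSet_Ioi] with x (hx : 1 < x)
  rw [norm_of_nonneg (by positivity)]
  exact div_le_div_of_nonneg_left (sq_nonneg _) (by positivity) (by simp)

theorem integral_Ioi_one_log_sq_div_sq_add_one :
    ∫ x in Ioi 1, log x ^ 2 / (x ^ 2 + 1) = π ^ 3 / 16 := by
  set F : ℕ → ℝ → ℝ := fun k x => (-1) ^ k * (log x ^ 2 / x ^ (2 * k + 1 + 1))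
  have hterm (k : ℕ) := integral_Ioi_one_log_sq_div_pow (Nat.add_one_ne_zero (2 * k))
  have hF_int (k : ℕ) : IntegrableOn (F k) (Ioi 1) :=
    (integrableOn_Ioi_one_log_sq_div_pow (Nat.add_one_ne_zero (2 * k))).const_mul _
  have hF_norm (k : ℕ) : ∫ x in Ioi 1, ‖F k x‖ = |2 * ((-1 : ℝ) ^ k / (2 * k + 1) ^ 3)| := by
    have hnorm : ∀ x ∈ Ioi (1 : ℝ), ‖F k x‖ = log x ^ 2 / x ^ (2 * k + 1 + 1) := fun x hx => by
      have : (0 : ℝ) < x := one_pos.trans hx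
      simp [F, abs_of_pos this]
    rw [setIntegral_congr_fun measurableSet_Ioi hnorm, hterm]
    simp only [abs_mul, abs_div, abs_pow, abs_neg, abs_one, one_pow, abs_two]
    rw [abs_of_pos (by positivity)]
    push_cast
    ring
  have hseries : HasSum (fun k => ∫ x in Ioi 1, F k x) (π ^ 3 / 16) := by
    have h := hasSum_neg_one_pow_div_odd_cube.mul_left 2
    rw [show 2 * (π ^ 3 / 32) = π ^ 3 / 16 by ring] at h
    refine h.congr_fun fun k => ?_
    rw [integral_const_mul, hterm]
    push_cast
    ring
  have hsum := hasSum_integral_of_summable_integral_norm hF_int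
    (by simpa only [hF_norm] using (hasSum_neg_one_pow_div_odd_cube.mul_left 2).summable.abs)
  rw [hseries.unique hsum]
  refine setIntegral_congr_fun measurableSet_Ioi fun x (hx : 1 < x) => ?_
  refine (((hasSum_neg_one_pow_div_pow_two_mul_add_two (hx.trans_le (le_abs_self x))).mul_left
    (log x ^ 2)).congr_fun fun k => ?_).tsum_eq.symm
  simp only [F]
  ring

section InvSubstitution

variable {E : Type*} [NormedAddCommGroup E] [NormedSpace ℝ E]

theorem image_inv_Ioi_one : (fun x : ℝ => x⁻¹) '' Ioi 1 = Ioo 0 1 := by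
  rw [image_inv_eq_inv, inv_Ioi₀ one_pos, inv_one]

theorem hasDerivWithinAt_inv_Ioi_one {x : ℝ} (hx : x ∈ Ioi 1) :
    HasDerivWithinAt (fun x : ℝ => x⁻¹) (-(x ^ 2)⁻¹) (Ioi 1) x :=
  (hasDerivAt_inv (one_pos.trans hx).ne').hasDerivWithinAt

theorem integral_Ioo_zero_one_eq_integral_Ioi_one_comp_inv (f : ℝ → E) :
    ∫ x in Ioo 0 1, f x = ∫ x in Ioi 1, (x ^ 2)⁻¹ • f x⁻¹ := by
  rw [← image_inv_Ioi_one, integral_image_eq_integral_abs_deriv_smul measurableSet_Ioi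
    (fun _ => hasDerivWithinAt_inv_Ioi_one) inv_injective.injOn]
  simp

theorem integrableOn_Ioo_zero_one_iff_comp_inv (f : ℝ → E) :
    IntegrableOn f (Ioo 0 1) ↔ IntegrableOn (fun x => (x ^ 2)⁻¹ • f x⁻¹) (Ioi 1) := by
  rw [← image_inv_Ioi_one, integrableOn_image_iff_integrableOn_abs_deriv_smul measurableSet_Ioi
    (fun _ => hasDerivWithinAt_inv_Ioi_one) inv_injective.injOn]
  simp

end InvSubstitution

theorem inv_sq_mul_log_sq_div_sq_add_one_inv {x : ℝ} (hx : x ≠ 0) :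
    (x ^ 2)⁻¹ * (log x⁻¹ ^ 2 / (x⁻¹ ^ 2 + 1)) = log x ^ 2 / (x ^ 2 + 1) := by
  rw [log_inv, neg_sq]
  field_simp
  ring

theorem integrableOn_Ioo_zero_one_log_sq_div_sq_add_one :
    IntegrableOn (fun x => log x ^ 2 / (x ^ 2 + 1)) (Ioo 0 1) := by
  rw [integrableOn_Ioo_zero_one_iff_comp_inv]
  refine integrableOn_Ioi_one_log_sq_div_sq_add_one.congr_fun (fun x hx => ?_) measurableSet_Ioi
  exact (inv_sq_mul_log_sq_div_sq_add_one_inv (one_pos.trans hx).ne').symm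

theorem integral_Ioo_zero_one_log_sq_div_sq_add_one :
    ∫ x in Ioo 0 1, log x ^ 2 / (x ^ 2 + 1) = π ^ 3 / 16 := by
  rw [integral_Ioo_zero_one_eq_integral_Ioi_one_comp_inv, ← integral_Ioi_one_log_sq_div_sq_add_one]
  exact setIntegral_congr_fun measurableSet_Ioi fun x hx =>
    inv_sq_mul_log_sq_div_sq_add_one_inv (one_pos.trans hx).ne'

theorem integrableOn_Ioi_zero_log_sq_div_sq_add_one :
    IntegrableOn (fun x => log x ^ 2 / (x ^ 2 + 1)) (Ioi 0) := by
  rw [← Ioo_union_Ici_eq_Ioi zero_lt_one]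
  exact integrableOn_Ioo_zero_one_log_sq_div_sq_add_one.union
    ((integrableOn_Ici_iff_integrableOn_Ioi).mpr integrableOn_Ioi_one_log_sq_div_sq_add_one)

theorem integral_Ioi_zero_log_sq_div_sq_add_one :
    ∫ x in Ioi 0, log x ^ 2 / (x ^ 2 + 1) = π ^ 3 / 8 := by
  rw [← Ioo_union_Ici_eq_Ioi zero_lt_one, setIntegral_union
    (Iio_disjoint_Ici le_rfl |>.mono_left Ioo_subset_Iio_self) measurableSet_Ici
    integrableOn_Ioo_zero_one_log_sq_div_sq_add_one
    ((integrableOn_Ici_iff_integrableOn_Ioi).mpr integrableOn_Ioi_one_log_sq_div_sq_add_one),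
    integral_Ici_eq_integral_Ioi, integral_Ioo_zero_one_log_sq_div_sq_add_one,
    integral_Ioi_one_log_sq_div_sq_add_one]
  ring

/-- The function `z ↦ (4 ln²|z| + π²) / (2π³ (z² + 1))` is a probability density on `ℝ`. -/
theorem cauchy_triple_product_density_is_pdf :
    (∀ z : ℝ, 0 ≤ (4 * (Real.log |z|) ^ 2 + Real.pi ^ 2) / (2 * Real.pi ^ 3 * (z ^ 2 + 1))) ∧
    ∫ z : ℝ, (4 * (Real.log |z|) ^ 2 + Real.pi ^ 2) / (2 * Real.pi ^ 3 * (z ^ 2 + 1)) = 1 := by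
  refine ⟨fun z => by positivity, ?_⟩
  have hsplit : (fun x => (4 * log x ^ 2 + π ^ 2) / (2 * π ^ 3 * (x ^ 2 + 1))) =
      fun x => 2 / π ^ 3 * (log x ^ 2 / (x ^ 2 + 1)) + (2 * π)⁻¹ * (1 + x ^ 2)⁻¹ := by
    ext x
    field_simp
    ring
  have h := integral_comp_abs (f := fun x => (4 * log x ^ 2 + π ^ 2) / (2 * π ^ 3 * (x ^ 2 + 1)))
  simp only [sq_abs] at h
  rw [h, hsplit, integral_add (integrableOn_Ioi_zero_log_sq_div_sq_add_one.const_mul _)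
    (integrable_inv_one_add_sq.integrableOn.const_mul _), integral_const_mul, integral_const_mul,
    integral_Ioi_zero_log_sq_div_sq_add_one, integral_Ioi_inv_one_add_sq, arctan_zero]
  field_simp
  ring
end

section
/- For every x > 0, ∫_0^x ln(t)/(t² − 1) dt = (1/2)[π²/6 − Li₂(1−x) − Li₂(−x) − ln(x) ln(1+x)], where Li₂ is the dilogarithm. -/
/-!
Call `P x` the right-hand side. Since `Li₂' y = -log (1 - y) / y`, for `t > 0`, `t ≠ 1` the terms of
`P` differentiate to `log t / (t - 1)`, `log (1 + t) / t` and `-(log (1 + t) / t + log t / (1 + t))`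
(times `1/2`), which sum to `log t / (t² - 1)`. `P` is continuous on `[0, ∞)` and `P 0 = 0` because
`Li₂ 1 = ∑ 1 / (n + 1)² = π² / 6`, by integrating `-log (1 - t) / t = ∑ tⁿ / (n + 1)` termwise.
The fundamental theorem of calculus off the countable set `{1}` then gives the formula. Both
integrands are integrable because their singularities are logarithmic or removable.
-/

open MeasureTheory Real Set intervalIntegral
open scoped Interval

/-- The dilogarithm, `Li₂(x) = −∫_0^x ln(1−t)/t dt` (valid for `x ≤ 1`). -/
noncomputable def dilog (x : ℝ) : ℝ := -∫ t in (0 : ℝ)..x, Real.log (1 - t) / t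

lemma intervalIntegrable_slope {f : ℝ → ℝ} {a b c : ℝ} (hf : ContinuousOn f [[b, c]])
    (ha : DifferentiableAt ℝ f a) :
    IntervalIntegrable (fun t => (f t - f a) / (t - a)) volume b c := by
  have hcont : ContinuousOn (dslope f a) [[b, c]] := fun t ht => by
    rcases eq_or_ne t a with rfl | hta
    · exact (continuousAt_dslope_same.2 ha).continuousWithinAt
    · exact (continuousWithinAt_dslope_of_ne hta).2 (hf t ht)
  refine hcont.intervalIntegrable.congr_ae ?_
  filter_upwards [ae_restrict_of_ae (volume.ae_ne a)] with t ht
  rw [dslope_of_ne f ht, slope_def_field]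

lemma intervalIntegrable_log_one_sub_div {a b : ℝ} (ha : a ≤ 1) (hb : b ≤ 1) :
    IntervalIntegrable (fun t => log (1 - t) / t) volume a b := by
  set m := min (min a b) 0
  have near_zero : IntervalIntegrable (fun t => log (1 - t) / t) volume m (1 / 2) := by
    have hcont : ContinuousOn (fun t => log (1 - t)) [[m, 1 / 2]] :=
      ContinuousOn.log (by fun_prop) fun t ht => by
        linarith [ht.2.trans (max_le (by simp [m]) le_rfl : max m (1 / 2) ≤ 1 / 2)]
    simpa using intervalIntegrable_slope hcont
      ((differentiableAt_id.const_sub 1).log (by norm_num) : DifferentiableAt ℝ _ (0 : ℝ))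
  have near_one : IntervalIntegrable (fun t => log (1 - t) / t) volume (1 / 2) 1 := by
    have hlog : IntervalIntegrable (fun t => log (1 - t)) volume (1 / 2) 1 := by
      simpa using (intervalIntegrable_log' (a := 1 - 1 / 2) (b := 1 - 1)).comp_sub_left 1
    simp only [div_eq_mul_inv]
    refine hlog.mul_continuousOn (continuousOn_inv₀.mono fun t ht => ?_)
    rw [uIcc_of_le (by norm_num)] at ht
    exact (by linarith [ht.1] : t ≠ 0)
  refine (near_zero.trans near_one).mono_set (uIcc_subset_uIcc ?_ ?_) <;>
    exact mem_uIcc_of_le (by simp [m]) (by assumption)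

lemma intervalIntegrable_log_div_sq_sub_one {a b : ℝ} (ha : 0 ≤ a) (hb : 0 ≤ b) :
    IntervalIntegrable (fun t => log t / (t ^ 2 - 1)) volume a b := by
  set M := max (max a b) 1
  have near_zero : IntervalIntegrable (fun t => log t / (t ^ 2 - 1)) volume 0 (1 / 2) := by
    simp only [div_eq_mul_inv]
    refine intervalIntegrable_log'.mul_continuousOn
      (ContinuousOn.inv₀ (by fun_prop) fun t ht => ?_)
    rw [uIcc_of_le (by norm_num)] at ht
    nlinarith [ht.1, ht.2]
  have away_from_zero : IntervalIntegrable (fun t => log t / (t ^ 2 - 1)) volume (1 / 2) M := by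
    have hpos : ∀ t ∈ [[1 / 2, M]], 0 < t := fun t ht => by
      rw [uIcc_of_le (by simp [M]; norm_num)] at ht; linarith [ht.1]
    have hslope : IntervalIntegrable (fun t => (log t - log 1) / (t - 1)) volume (1 / 2) M :=
      intervalIntegrable_slope (continuousOn_log.mono fun t ht => (hpos t ht).ne')
        (differentiableAt_log one_ne_zero)
    have hinv : ContinuousOn (fun t : ℝ => (t + 1)⁻¹) [[1 / 2, M]] :=
      ContinuousOn.inv₀ (by fun_prop) fun t ht => by linarith [hpos t ht]
    convert hslope.mul_continuousOn hinv using 1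
    funext t
    rw [log_one, sub_zero, show t ^ 2 - 1 = (t - 1) * (t + 1) by ring, div_mul_eq_div_div,
      div_eq_mul_inv]
  refine (near_zero.trans away_from_zero).mono_set (uIcc_subset_uIcc ?_ ?_) <;>
    exact mem_uIcc_of_le (by assumption) (by simp [M])

lemma dilog_zero : dilog 0 = 0 := by
  simp [dilog]

lemma continuousOn_dilog : ContinuousOn dilog (Iic 1) := fun y hy => by
  set c := min y 0 - 1
  have hc : c < y := by simp only [c]; linarith [min_le_left y 0]
  have hprim := continuousOn_primitive_interval' (a := 0)
    (intervalIntegrable_log_one_sub_div (a := c) (b := 1) (by linarith [hy.out]) le_rfl)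
    (mem_uIcc_of_le (by simp [c]) zero_le_one) y (mem_uIcc_of_le hc.le hy)
  refine hprim.neg.mono_of_mem_nhdsWithin ?_
  rw [uIcc_of_le (by linarith [hy.out]), ← Iic_inter_Ici]
  exact inter_mem_nhdsWithin _ (Ici_mem_nhds hc)

lemma hasDerivAt_dilog {y : ℝ} (hy0 : y ≠ 0) (hy1 : y < 1) :
    HasDerivAt dilog (-(log (1 - y) / y)) y := by
  refine (integral_hasDerivAt_right (intervalIntegrable_log_one_sub_div zero_le_one hy1.le)
    ((by fun_prop : Measurable _).stronglyMeasurable.stronglyMeasurableAtFilter) ?_).neg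
  exact ContinuousAt.div (ContinuousAt.log (by fun_prop) (by linarith)) continuousAt_id hy0

/-- Near `0` the product is `(t log t) · (log (1 + t) / t)`, and both factors extend
continuously. -/
lemma continuousOn_log_mul_log_one_add :
    ContinuousOn (fun t => log t * log (1 + t)) (Ioi (-1)) := by
  have hslope : ContinuousOn (dslope (fun s => log (1 + s)) 0) (Ioi (-1)) := by
    refine (continuousOn_dslope (Ioi_mem_nhds (by norm_num))).2 ⟨?_, ?_⟩
    · exact ContinuousOn.log (by fun_prop) fun t ht => by linarith [ht.out]
    · exact (differentiableAt_id.const_add 1).log (by norm_num)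
  have hmul := continuous_mul_log.continuousOn.mul hslope
  refine hmul.congr fun t _ => ?_
  rcases eq_or_ne t 0 with rfl | ht
  · simp
  · rw [Pi.mul_apply, dslope_of_ne _ ht, slope_def_field]
    simp only [add_zero, log_one, sub_zero]
    field_simp

lemma hasSum_one_div_succ_sq : HasSum (fun n : ℕ => 1 / ((n : ℝ) + 1) ^ 2) (π ^ 2 / 6) := by
  simpa using (hasSum_nat_add_iff' 1).2 hasSum_zeta_two

lemma integral_pow_div_succ (n : ℕ) :
    ∫ t in Ioo (0 : ℝ) 1, t ^ n / (n + 1) = 1 / ((n : ℝ) + 1) ^ 2 := by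
  rw [← integral_Ioc_eq_integral_Ioo, ← integral_of_le zero_le_one, intervalIntegral.integral_div,
    integral_pow]
  field_simp
  ring

lemma hasSum_pow_div_succ {t : ℝ} (ht : |t| < 1) (ht0 : t ≠ 0) :
    HasSum (fun n : ℕ => t ^ n / (n + 1)) (-(log (1 - t) / t)) := by
  have h := (hasSum_pow_div_log_of_abs_lt_one ht).div_const t
  rw [neg_div] at h
  refine h.congr_fun fun n => ?_
  rw [pow_succ]
  field_simp

lemma dilog_one : dilog 1 = π ^ 2 / 6 := by
  have hint : ∀ n : ℕ, IntegrableOn (fun t : ℝ => t ^ n / (n + 1)) (Ioo 0 1) :=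
    fun n => (by fun_prop : Continuous _).integrableOn_Icc.mono_set Ioo_subset_Icc_self
  have hnorm (n : ℕ) : ∫ t in Ioo (0 : ℝ) 1, ‖t ^ n / (n + 1)‖ = 1 / ((n : ℝ) + 1) ^ 2 := by
    rw [← integral_pow_div_succ]
    refine setIntegral_congr_fun measurableSet_Ioo fun t ht => norm_of_nonneg ?_
    have := ht.1.le
    positivity
  have htermwise := hasSum_integral_of_summable_integral_norm hint
    (by simpa only [hnorm] using hasSum_one_div_succ_sq.summable)
  simp only [integral_pow_div_succ] at htermwise
  rw [setIntegral_congr_fun measurableSet_Ioo fun t ht =>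
    (hasSum_pow_div_succ (abs_lt.2 ⟨by linarith [ht.1], ht.2⟩) ht.1.ne').tsum_eq,
    MeasureTheory.integral_neg, ← integral_Ioc_eq_integral_Ioo, ← integral_of_le zero_le_one]
    at htermwise
  exact htermwise.unique hasSum_one_div_succ_sq

noncomputable def logDivSqSubOnePrimitive (x : ℝ) : ℝ :=
  (1 / 2) * (π ^ 2 / 6 - dilog (1 - x) - dilog (-x) - log x * log (1 + x))

lemma logDivSqSubOnePrimitive_zero : logDivSqSubOnePrimitive 0 = 0 := by
  simp [logDivSqSubOnePrimitive, dilog_one, dilog_zero]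

lemma continuousOn_logDivSqSubOnePrimitive : ContinuousOn logDivSqSubOnePrimitive (Ici 0) := by
  have hdilog_one_sub : ContinuousOn (fun t => dilog (1 - t)) (Ici 0) :=
    continuousOn_dilog.comp (by fun_prop) fun t ht => by simpa using ht.out
  have hdilog_neg : ContinuousOn (fun t => dilog (-t)) (Ici 0) :=
    continuousOn_dilog.comp (by fun_prop) fun t ht => show -t ≤ 1 by linarith [ht.out]
  have hlog : ContinuousOn (fun t => log t * log (1 + t)) (Ici 0) :=
    continuousOn_log_mul_log_one_add.mono fun t ht => show -1 < t by linarith [ht.out]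
  exact continuousOn_const.mul (((continuousOn_const.sub hdilog_one_sub).sub hdilog_neg).sub hlog)

lemma hasDerivAt_logDivSqSubOnePrimitive {t : ℝ} (ht0 : 0 < t) (ht1 : t ≠ 1) :
    HasDerivAt logDivSqSubOnePrimitive (log t / (t ^ 2 - 1)) t := by
  have hdilog_one_sub := (hasDerivAt_dilog (sub_ne_zero.2 ht1.symm) (by linarith)).comp t
    ((hasDerivAt_id t).const_sub 1)
  have hdilog_neg := (hasDerivAt_dilog (neg_ne_zero.2 ht0.ne') (by linarith)).comp t
    (hasDerivAt_neg t)
  have hlog := (hasDerivAt_log ht0.ne').mul (((hasDerivAt_id' t).const_add 1).log (by linarith))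
  refine ((((hdilog_one_sub.const_sub _).sub hdilog_neg).sub hlog).const_mul (1 / 2)).congr_deriv ?_
  have : t + 1 ≠ 0 := by linarith
  have : t - 1 ≠ 0 := sub_ne_zero.2 ht1
  have : 1 - t ≠ 0 := sub_ne_zero.2 ht1.symm
  have : t ^ 2 - 1 ≠ 0 := by rw [show t ^ 2 - 1 = (t - 1) * (t + 1) by ring]; positivity
  simp only [sub_sub_cancel, sub_neg_eq_add]
  field_simp
  ring

/-- For `x > 0`, `∫_0^x ln t/(t² − 1) dt
  = (1/2)[π²/6 − Li₂(1−x) − Li₂(−x) − ln x · ln(1+x)]`. -/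
theorem integral_log_div_sq_sub_one (x : ℝ) (hx : 0 < x) :
    ∫ t in (0 : ℝ)..x, Real.log t / (t ^ 2 - 1) =
      (1 / 2) * (Real.pi ^ 2 / 6 - dilog (1 - x) - dilog (-x)
        - Real.log x * Real.log (1 + x)) := by
  rw [integral_eq_of_hasDerivAt_off_countable_of_le _ _ hx.le (countable_singleton 1)
    (continuousOn_logDivSqSubOnePrimitive.mono Icc_subset_Ici_self)
    (fun t ht => hasDerivAt_logDivSqSubOnePrimitive ht.1.1 ht.2)
    (intervalIntegrable_log_div_sq_sub_one le_rfl hx.le), logDivSqSubOnePrimitive_zero, sub_zero]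
  rfl
end

section
/- Let X₁, X₂ ~ N(0,1) and Y₁ ~ N(0,1) be independent standard normals and Z = X₁X₂/Y₁. Then Z has probability density function f(z) = (1/(√2 π^{3/2})) e^{z²/2} E₁(z²/2) for z ≠ 0, where E₁(x) = ∫_x^∞ e^{-t}/t dt is the exponential integral. -/
/-!
Write `Z = X₁ / C` with `C = Y₁ / X₂`. A ratio of independent standard normals is standard
Cauchy, and for fixed `c ≠ 0` the variable `X₁ / c` has density `|c| φ(c z)`. Hence `Z` has
density `∫ |c| φ(c z) dCauchy(c) = (π √(2π))⁻¹ ∫ |c| e^{-z²c²/2} / (1 + c²) dc`, and the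
substitution `s = (z²/2)(1 + c²)` turns this integral into `e^{z²/2} E₁(z²/2)`.
-/

open MeasureTheory ProbabilityTheory Real Set
open scoped ENNReal NNReal

/-- The exponential integral `E₁(x) = ∫_x^∞ e^{-t}/t dt`. -/
noncomputable def expInt (x : ℝ) : ℝ := ∫ t in Set.Ioi x, Real.exp (-t) / t

lemma lintegral_eq_abs_mul_lintegral_comp_mul_left {g : ℝ → ℝ≥0∞} (hg : Measurable g) {a : ℝ}
    (ha : a ≠ 0) : ∫⁻ x, g x = ENNReal.ofReal |a| * ∫⁻ x, g (a * x) := by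
  rw [← lintegral_map hg (measurable_const_mul a), Real.map_volume_mul_left ha,
    lintegral_smul_measure, smul_eq_mul, ← mul_assoc, ← ENNReal.ofReal_mul (abs_nonneg a),
    ← abs_mul, mul_inv_cancel₀ ha, abs_one, ENNReal.ofReal_one, one_mul]

lemma ProbabilityTheory.iIndepFun.map_prodMk_prodMk_eq_prod {Ω ι β : Type*} [MeasurableSpace Ω]
    [MeasurableSpace β] {P : Measure Ω} [IsFiniteMeasure P] {W : ι → Ω → β} (h : iIndepFun W P)
    (hW : ∀ i, Measurable (W i)) {i j k : ι} (hij : i ≠ j) (hik : i ≠ k) (hjk : j ≠ k) :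
    P.map (fun ω => ((W i ω, W j ω), W k ω))
      = ((P.map (W i)).prod (P.map (W j))).prod (P.map (W k)) := by
  rw [(indepFun_iff_map_prod_eq_prod_map_map ((hW i).prodMk (hW j)).aemeasurable
      (hW k).aemeasurable).1 (h.indepFun_prodMk hW i j k hik hjk),
    (indepFun_iff_map_prod_eq_prod_map_map (hW i).aemeasurable (hW j).aemeasurable).1
      (h.indepFun hij)]

lemma expInt_nonneg {x : ℝ} (hx : 0 ≤ x) : 0 ≤ expInt x :=
  setIntegral_nonneg measurableSet_Ioi fun _ ht => div_nonneg (exp_pos _).le (hx.trans ht.le)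

@[fun_prop]
lemma measurable_expInt : Measurable expInt := by
  have h : StronglyMeasurable (fun p : ℝ × ℝ => {q : ℝ × ℝ | q.1 < q.2}.indicator
      (fun q => exp (-q.2) / q.2) p) :=
    (Measurable.indicator (by fun_prop) (measurableSet_lt measurable_fst measurable_snd))
      |>.stronglyMeasurable
  convert (h.integral_prod_right' (ν := volume)).measurable with x
  rw [expInt, ← integral_indicator measurableSet_Ioi]
  rfl

lemma integral_Ioi_mul_exp_neg_mul_sq {b : ℝ} (hb : 0 < b) :
    ∫ x in Ioi 0, x * exp (-b * x ^ 2) = (2 * b)⁻¹ := by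
  have hderiv (x : ℝ) (_ : x ∈ Ici 0) :
      HasDerivAt (fun x => -(2 * b)⁻¹ * exp (-b * x ^ 2)) (x * exp (-b * x ^ 2)) x := by
    refine ((((hasDerivAt_pow 2 x).const_mul (-b)).exp).const_mul (-(2 * b)⁻¹)).congr_deriv ?_
    field_simp
    ring
  have hlim : Filter.Tendsto (fun x => -(2 * b)⁻¹ * exp (-b * x ^ 2)) Filter.atTop (nhds 0) := by
    have := (tendsto_exp_atBot.comp ((Filter.tendsto_pow_atTop two_ne_zero).const_mul_atTop_of_neg
      (neg_lt_zero.2 hb))).const_mul (-(2 * b)⁻¹)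
    simpa using this
  rw [integral_Ioi_of_hasDerivAt_of_tendsto' hderiv
    (integrable_mul_exp_neg_mul_sq hb).integrableOn hlim]
  simp

lemma integral_abs_mul_exp_neg_mul_sq {b : ℝ} (hb : 0 < b) :
    ∫ x, |x| * exp (-b * x ^ 2) = b⁻¹ := by
  have h (x : ℝ) : |x| * exp (-b * x ^ 2) = |x| * exp (-b * |x| ^ 2) := by rw [sq_abs]
  simp_rw [h]
  rw [integral_comp_abs (f := fun x => x * exp (-b * x ^ 2)), integral_Ioi_mul_exp_neg_mul_sq hb]
  field_simp

lemma integrable_abs_mul_exp_neg_mul_sq {b : ℝ} (hb : 0 < b) :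
    Integrable fun x : ℝ => |x| * exp (-b * x ^ 2) :=
  (integrable_mul_exp_neg_mul_sq hb).norm.congr (ae_of_all _ fun x => by simp)

lemma image_mul_one_add_sq_Ioi_zero {b : ℝ} (hb : 0 < b) :
    (fun t : ℝ => b * (1 + t ^ 2)) '' Ioi 0 = Ioi b := by
  ext s
  simp only [mem_image, mem_Ioi]
  constructor
  · rintro ⟨t, ht, rfl⟩
    nlinarith [mul_pos hb (pow_pos ht 2)]
  · intro hs
    have h : 0 < s / b - 1 := by rw [sub_pos, one_lt_div hb]; exact hs
    refine ⟨√(s / b - 1), sqrt_pos.2 h, ?_⟩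
    rw [sq_sqrt h.le]
    field_simp
    ring

lemma expInt_eq_integral_Ioi_zero {b : ℝ} (hb : 0 < b) :
    expInt b = 2 * exp (-b) * ∫ t in Ioi 0, t * exp (-b * t ^ 2) / (1 + t ^ 2) := by
  have hderiv (t : ℝ) (_ : t ∈ Ioi 0) :
      HasDerivWithinAt (fun t => b * (1 + t ^ 2)) (2 * b * t) (Ioi 0) t :=
    (((hasDerivAt_pow 2 t).const_add 1).const_mul b).hasDerivWithinAt.congr_deriv (by ring)
  have hinj : InjOn (fun t : ℝ => b * (1 + t ^ 2)) (Ioi 0) := fun t₁ h₁ t₂ h₂ h => by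
    have : t₁ ^ 2 = t₂ ^ 2 := by simpa [hb.ne'] using h
    exact (pow_left_inj₀ (le_of_lt h₁) (le_of_lt h₂) two_ne_zero).1 this
  have := integral_image_eq_integral_abs_deriv_smul measurableSet_Ioi hderiv hinj
    fun s => exp (-s) / s
  rw [image_mul_one_add_sq_Ioi_zero hb] at this
  rw [expInt, this, ← integral_const_mul]
  refine setIntegral_congr_fun measurableSet_Ioi fun t (ht : 0 < t) => ?_
  rw [smul_eq_mul, abs_of_pos (by positivity), show -(b * (1 + t ^ 2)) = -b + -b * t ^ 2 by ring,
    exp_add]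
  field_simp

lemma integral_abs_mul_exp_neg_mul_sq_div_one_add_sq {b : ℝ} (hb : 0 < b) :
    ∫ t, |t| * exp (-b * t ^ 2) / (1 + t ^ 2) = exp b * expInt b := by
  have h (t : ℝ) : |t| * exp (-b * t ^ 2) / (1 + t ^ 2)
      = |t| * exp (-b * |t| ^ 2) / (1 + |t| ^ 2) := by rw [sq_abs]
  simp_rw [h]
  rw [integral_comp_abs (f := fun t => t * exp (-b * t ^ 2) / (1 + t ^ 2)),
    expInt_eq_integral_Ioi_zero hb, ← mul_assoc, ← mul_assoc, mul_comm (exp b), mul_assoc 2,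
    ← exp_add]
  simp

lemma integrable_abs_mul_exp_neg_mul_sq_div_one_add_sq {b : ℝ} (hb : 0 < b) :
    Integrable fun t : ℝ => |t| * exp (-b * t ^ 2) / (1 + t ^ 2) := by
  refine (integrable_abs_mul_exp_neg_mul_sq hb).mono
    (Measurable.aestronglyMeasurable (by fun_prop)) (ae_of_all _ fun t => ?_)
  rw [norm_div, norm_of_nonneg (by positivity : (0 : ℝ) ≤ 1 + t ^ 2)]
  exact div_le_self (norm_nonneg _) (by nlinarith)

lemma gaussianPDFReal_zero_one (x : ℝ) :
    gaussianPDFReal 0 1 x = (√(2 * π))⁻¹ * exp (-x ^ 2 / 2) := by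
  simp [gaussianPDFReal]

lemma lintegral_abs_mul_gaussianPDFReal_mul_mul (t : ℝ) :
    ∫⁻ y, ENNReal.ofReal (|y| * gaussianPDFReal 0 1 (y * t) * gaussianPDFReal 0 1 y)
      = cauchyPDF 0 1 t := by
  have hb : 0 < (1 + t ^ 2) / 2 := by positivity
  have h (y : ℝ) : |y| * gaussianPDFReal 0 1 (y * t) * gaussianPDFReal 0 1 y
      = (2 * π)⁻¹ * (|y| * exp (-((1 + t ^ 2) / 2) * y ^ 2)) := by
    have hc : (√(2 * π))⁻¹ * (√(2 * π))⁻¹ = (2 * π)⁻¹ := by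
      rw [← mul_inv, mul_self_sqrt (by positivity)]
    rw [gaussianPDFReal_zero_one, gaussianPDFReal_zero_one, ← hc,
      show -((1 + t ^ 2) / 2) * y ^ 2 = -(y * t) ^ 2 / 2 + -y ^ 2 / 2 by ring, exp_add]
    ring
  simp_rw [h]
  rw [← ofReal_integral_eq_lintegral_ofReal ((integrable_abs_mul_exp_neg_mul_sq hb).const_mul _)
    (ae_of_all _ fun y => by positivity), integral_const_mul, integral_abs_mul_exp_neg_mul_sq hb,
    cauchyPDF_def, cauchyPDFReal_def]
  congr 1
  field_simp
  simp [add_comm]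

lemma lintegral_comp_div_gaussianReal_prod {g : ℝ → ℝ≥0∞} (hg : Measurable g) :
    ∫⁻ p, g (p.1 / p.2) ∂(gaussianReal 0 1).prod (gaussianReal 0 1)
      = ∫⁻ t, g t * cauchyPDF 0 1 t := by
  have hφ := measurable_gaussianPDF 0 1
  have hinner : ∀ᵐ y : ℝ, ∫⁻ w, gaussianPDF 0 1 w * gaussianPDF 0 1 y * g (w / y)
      = ∫⁻ t, ENNReal.ofReal (|y| * gaussianPDFReal 0 1 (y * t) * gaussianPDFReal 0 1 y)
          * g t := by
    filter_upwards [Measure.ae_ne volume 0] with y hy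
    rw [lintegral_eq_abs_mul_lintegral_comp_mul_left (by fun_prop) hy,
      ← lintegral_const_mul' _ _ ENNReal.ofReal_ne_top]
    refine lintegral_congr fun t => ?_
    rw [mul_div_cancel_left₀ t hy,
      ENNReal.ofReal_mul (mul_nonneg (abs_nonneg y) (gaussianPDFReal_nonneg 0 1 _)),
      ENNReal.ofReal_mul (abs_nonneg y)]
    simp only [gaussianPDF]
    ring
  rw [gaussianReal_of_var_ne_zero 0 one_ne_zero, prod_withDensity hφ hφ,
    lintegral_withDensity_eq_lintegral_mul _ (by fun_prop) (by fun_prop),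
    lintegral_prod_symm' _ (by fun_prop)]
  simp only [Pi.mul_apply]
  rw [lintegral_congr_ae hinner, lintegral_lintegral_swap (by fun_prop)]
  refine lintegral_congr fun t => ?_
  rw [lintegral_mul_const _ (by fun_prop), lintegral_abs_mul_gaussianPDFReal_mul_mul, mul_comm]

theorem map_div_gaussianReal_prod :
    ((gaussianReal 0 1).prod (gaussianReal 0 1)).map (fun p => p.1 / p.2) = cauchyMeasure 0 1 := by
  ext s hs
  rw [Measure.map_apply (by fun_prop) hs, ← lintegral_indicator_one (hs.preimage (by fun_prop)),
    cauchyMeasure_of_scale_ne_zero 0 one_ne_zero, withDensity_apply _ hs,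
    ← lintegral_indicator hs]
  convert lintegral_comp_div_gaussianReal_prod (measurable_one.indicator hs) using 1
  · rfl
  · exact lintegral_congr fun t => by by_cases ht : t ∈ s <;> simp [ht]

lemma gaussianReal_setOf_div_le {c : ℝ} (hc : c ≠ 0) (a : ℝ) :
    gaussianReal 0 1 {x | x / c ≤ a}
      = ∫⁻ z in Iic a, ENNReal.ofReal (|c| * gaussianPDFReal 0 1 (c * z)) := by
  rw [show {x | x / c ≤ a} = (· / c) ⁻¹' Iic a from rfl,
    ← Measure.map_apply (by fun_prop) measurableSet_Iic, gaussianReal_map_div_const,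
    gaussianReal_apply _ (by simp [← NNReal.coe_eq_zero, hc])]
  refine lintegral_congr fun z => ?_
  rw [gaussianPDF, gaussianPDFReal_mul hc]
  congr 1
  simp [abs_ne_zero.2 hc]

noncomputable def normalProductRatioPDF (z : ℝ) : ℝ :=
  1 / (√2 * π ^ ((3 : ℝ) / 2)) * (exp (z ^ 2 / 2) * expInt (z ^ 2 / 2))

lemma normalProductRatioPDF_nonneg (z : ℝ) : 0 ≤ normalProductRatioPDF z := by
  have := expInt_nonneg (by positivity : 0 ≤ z ^ 2 / 2)
  unfold normalProductRatioPDF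
  positivity

lemma measurable_normalProductRatioPDF : Measurable normalProductRatioPDF := by
  unfold normalProductRatioPDF
  fun_prop

lemma lintegral_abs_mul_gaussianPDFReal_mul_cauchyMeasure {z : ℝ} (hz : z ≠ 0) :
    ∫⁻ c, ENNReal.ofReal (|c| * gaussianPDFReal 0 1 (c * z)) ∂cauchyMeasure 0 1
      = ENNReal.ofReal (normalProductRatioPDF z) := by
  have hb : 0 < z ^ 2 / 2 := by positivity
  have h (c : ℝ) : cauchyPDF 0 1 c * ENNReal.ofReal (|c| * gaussianPDFReal 0 1 (c * z))
      = ENNReal.ofReal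
          ((√(2 * π))⁻¹ * π⁻¹ * (|c| * exp (-(z ^ 2 / 2) * c ^ 2) / (1 + c ^ 2))) := by
    rw [cauchyPDF_def, ← ENNReal.ofReal_mul (cauchyPDF_pos 0 one_ne_zero c).le,
      gaussianPDFReal_zero_one, cauchyPDFReal_def]
    congr 1
    push_cast
    field_simp
    ring
  rw [cauchyMeasure_of_scale_ne_zero 0 one_ne_zero,
    lintegral_withDensity_eq_lintegral_mul _ (measurable_cauchyPDF 0 1) (by fun_prop)]
  simp only [Pi.mul_apply, h]
  rw [← ofReal_integral_eq_lintegral_ofReal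
      ((integrable_abs_mul_exp_neg_mul_sq_div_one_add_sq hb).const_mul _)
      (ae_of_all _ fun c => by positivity),
    integral_const_mul, integral_abs_mul_exp_neg_mul_sq_div_one_add_sq hb, normalProductRatioPDF]
  congr 2
  rw [sqrt_mul zero_le_two, show (3 : ℝ) / 2 = 1 + 1 / 2 by norm_num, rpow_add pi_pos, rpow_one,
    ← sqrt_eq_rpow]
  field_simp

lemma gaussianReal_prod_prod_div_div_le (a : ℝ) :
    ((gaussianReal 0 1).prod (gaussianReal 0 1)).prod (gaussianReal 0 1)
        {q | q.2 / (q.1.1 / q.1.2) ≤ a}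
      = ∫⁻ c, gaussianReal 0 1 {x | x / c ≤ a} ∂cauchyMeasure 0 1 := by
  have hG : Measurable fun c => gaussianReal 0 1 {x | x / c ≤ a} :=
    measurable_measure_prodMk_left (s := {p : ℝ × ℝ | p.2 / p.1 ≤ a})
      (measurableSet_le (by fun_prop) measurable_const)
  rw [Measure.prod_apply (measurableSet_le (by fun_prop) measurable_const),
    ← map_div_gaussianReal_prod, lintegral_map hG (by fun_prop)]
  rfl

lemma lintegral_gaussianReal_div_le_cauchyMeasure (a : ℝ) :
    ∫⁻ c, gaussianReal 0 1 {x | x / c ≤ a} ∂cauchyMeasure 0 1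
      = ∫⁻ z in Iic a, ENNReal.ofReal (normalProductRatioPDF z) := by
  have hne : ∀ᵐ c ∂cauchyMeasure 0 1, c ≠ 0 := by
    rw [cauchyMeasure_of_scale_ne_zero 0 one_ne_zero]
    exact (withDensity_absolutelyContinuous _ _).ae_le (Measure.ae_ne volume 0)
  rw [lintegral_congr_ae (hne.mono fun c hc => gaussianReal_setOf_div_le hc a),
    lintegral_lintegral_swap (by fun_prop)]
  exact lintegral_congr_ae ((ae_restrict_of_ae (Measure.ae_ne volume 0)).mono fun z hz =>
    lintegral_abs_mul_gaussianPDFReal_mul_cauchyMeasure hz)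

/-- With `X₁, X₂, Y₁` independent standard normals, `Z = X₁X₂/Y₁` has density
`z ↦ (1/(√2 π^{3/2})) e^{z²/2} E₁(z²/2)`. -/
theorem pdf_normal_product_ratio_2_1
    {Ω : Type*} [MeasureSpace Ω] [IsProbabilityMeasure (ℙ : Measure Ω)]
    (W : Fin 3 → Ω → ℝ) (hW : ∀ i, Measurable (W i))
    (hlaw : ∀ i, Measure.map (W i) ℙ = gaussianReal 0 1)
    (hindep : iIndepFun W ℙ) :
    ∀ a : ℝ, ℙ {ω | W 0 ω * W 1 ω / W 2 ω ≤ a} =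
      ENNReal.ofReal (∫ z in Set.Iic a,
        (1 / (Real.sqrt 2 * Real.pi ^ ((3 : ℝ) / 2))) *
          (Real.exp (z ^ 2 / 2) * expInt (z ^ 2 / 2))) := by
  intro a
  have hset : {ω | W 0 ω * W 1 ω / W 2 ω ≤ a} = (fun ω => ((W 2 ω, W 1 ω), W 0 ω)) ⁻¹'
      {q : (ℝ × ℝ) × ℝ | q.2 / (q.1.1 / q.1.2) ≤ a} := by
    ext ω
    simp [div_div_eq_mul_div]
  have hP : ℙ {ω | W 0 ω * W 1 ω / W 2 ω ≤ a}
      = ∫⁻ z in Iic a, ENNReal.ofReal (normalProductRatioPDF z) := by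
    rw [hset, ← Measure.map_apply (by fun_prop) (measurableSet_le (by fun_prop) measurable_const),
      hindep.map_prodMk_prodMk_eq_prod hW (by decide) (by decide) (by decide), hlaw, hlaw, hlaw,
      gaussianReal_prod_prod_div_div_le, lintegral_gaussianReal_div_le_cauchyMeasure]
  have hint : IntegrableOn normalProductRatioPDF (Iic a) :=
    ⟨measurable_normalProductRatioPDF.aestronglyMeasurable,
      (hasFiniteIntegral_iff_ofReal (ae_of_all _ normalProductRatioPDF_nonneg)).2
        (hP ▸ measure_lt_top _ _)⟩
  rw [hP, ← ofReal_integral_eq_lintegral_ofReal hint (ae_of_all _ normalProductRatioPDF_nonneg)]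
  rfl
end

section
/- The function f(z) = (1/(√2 π^{3/2})) e^{z²/2} E₁(z²/2) (for z ≠ 0) is a probability density: ∫_{-∞}^∞ (1/(√2 π^{3/2})) e^{z²/2} E₁(z²/2) dz = 1, where E₁(x) = ∫_x^∞ e^{-t}/t dt. -/
open MeasureTheory Real Set

lemma integral_Ioi_comp_add (f : ℝ → ℝ) (a c : ℝ) :
    ∫ x in Ioi a, f (x + c) = ∫ x in Ioi (a + c), f x := by
  have h := (measurePreserving_add_right volume c).setIntegral_preimage_emb
    (measurableEmbedding_addRight c) f (Ioi (a + c))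
  rw [preimage_add_const_Ioi] at h
  simpa using h


lemma exp_mul_expInt {x : ℝ} (hx : 0 < x) :
    Real.exp x * expInt x = ∫ u in Ioi (0:ℝ), Real.exp (-(x*u)) / (1+u) := by
  have h1 := integral_Ioi_comp_add (fun t => Real.exp (-t) / t) 0 x
  rw [zero_add] at h1
  have h2 := integral_comp_mul_left_Ioi (fun s => Real.exp (-(s+x)) / (s+x)) 0 hx
  simp only [mul_zero, smul_eq_mul] at h2
  have h3 : expInt x = x * ∫ v in Ioi (0:ℝ), Real.exp (-(x*v+x)) / (x*v+x) := by
    rw [expInt, ← h1, h2, ← mul_assoc, mul_inv_cancel₀ hx.ne', one_mul]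
  rw [h3, ← integral_const_mul, ← integral_const_mul]
  refine setIntegral_congr_fun measurableSet_Ioi (fun v hv => ?_)
  have hv' : (0:ℝ) < v := hv
  have hxv : x * v + x = x * (1 + v) := by ring
  have he : Real.exp x * Real.exp (-(x*v+x)) = Real.exp (-(x*v)) := by
    rw [← Real.exp_add]; ring_nf
  have h1v : (0:ℝ) < 1 + v := by linarith
  rw [hxv] at *
  have hx2 : x / (x*(1+v)) = 1/(1+v) := by
    rw [div_eq_div_iff (by positivity) h1v.ne']
    ring
  calc Real.exp x * (x * (Real.exp (-(x*(1+v))) / (x*(1+v))))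
      = Real.exp x * Real.exp (-(x*(1+v))) * (x / (x*(1+v))) := by ring
    _ = Real.exp (-(x*v)) / (1+v) := by rw [he, hx2, mul_one_div]

lemma core_measurable : Measurable (fun u : ℝ => u ^ (-(1/2) : ℝ) / (1+u)) := by
  fun_prop

lemma core_integrable : IntegrableOn (fun u : ℝ => u ^ (-(1/2) : ℝ) / (1+u)) (Ioi 0) := by
  have hsplit : Ioi (0:ℝ) = Ioc 0 1 ∪ Ioi 1 := (Set.Ioc_union_Ioi_eq_Ioi (by norm_num)).symm
  rw [hsplit]
  refine IntegrableOn.union ?_ ?_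
  · have h1 : IntegrableOn (fun u : ℝ => u ^ (-(1/2) : ℝ)) (Ioc 0 1) := by
      have := intervalIntegral.intervalIntegrable_rpow' (a := 0) (b := 1) (r := -(1/2)) (by norm_num)
      exact (intervalIntegrable_iff_integrableOn_Ioc_of_le (by norm_num : (0:ℝ) ≤ 1)).mp this
    refine h1.mono' core_measurable.aestronglyMeasurable ?_
    filter_upwards [ae_restrict_mem measurableSet_Ioc] with u hu
    have hu0 : (0:ℝ) < u := hu.1
    have h1u : (1:ℝ) ≤ 1 + u := by linarith
    rw [norm_div, norm_of_nonneg (by positivity : (0:ℝ) ≤ u ^ (-(1/2):ℝ)),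
      norm_of_nonneg (by linarith : (0:ℝ) ≤ 1 + u)]
    exact div_le_of_le_mul₀ (by positivity) (by positivity)
      (by nlinarith [rpow_nonneg hu0.le (-(1/2):ℝ)])
  · have h2 : IntegrableOn (fun u : ℝ => u ^ (-(3/2) : ℝ)) (Ioi 1) :=
      integrableOn_Ioi_rpow_of_lt (by norm_num) one_pos
    refine h2.mono' core_measurable.aestronglyMeasurable ?_
    filter_upwards [ae_restrict_mem measurableSet_Ioi] with u hu
    have hu1 : (1:ℝ) < u := hu
    have hu0 : (0:ℝ) < u := by linarith
    rw [norm_div, norm_of_nonneg (by positivity : (0:ℝ) ≤ u ^ (-(1/2):ℝ)),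
      norm_of_nonneg (by linarith : (0:ℝ) ≤ 1 + u)]
    have : u ^ (-(3/2) : ℝ) = u ^ (-(1/2) : ℝ) / u := by
      rw [eq_div_iff hu0.ne', ← Real.rpow_add_one hu0.ne']; norm_num
    rw [this]
    exact div_le_div_of_nonneg_left (by positivity) hu0 (by linarith)

lemma core_value : ∫ u in Ioi (0:ℝ), u ^ (-(1/2) : ℝ) / (1+u) = π := by
  rw [← integral_comp_rpow_Ioi_of_pos (g := fun y : ℝ => y ^ (-(1/2) : ℝ) / (1+y)) two_pos]
  have key : ∀ x ∈ Ioi (0:ℝ), ((2:ℝ) * x ^ ((2:ℝ) - 1)) • ((x ^ (2:ℝ)) ^ (-(1/2) : ℝ) / (1 + x ^ (2:ℝ)))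
      = 2 * (1 + x ^ 2)⁻¹ := by
    intro x hx
    have hx0 : (0:ℝ) < x := hx
    have h1 : x ^ ((2:ℝ) - 1) = x := by norm_num
    have h2 : (x ^ (2:ℝ)) ^ (-(1/2) : ℝ) = x⁻¹ := by
      rw [← Real.rpow_mul hx0.le]
      norm_num [Real.rpow_neg_one]
    have h3 : x ^ (2:ℝ) = x ^ 2 := by
      rw [← Real.rpow_natCast x 2]; norm_num
    rw [smul_eq_mul, h1, h2, h3]
    field_simp
  rw [setIntegral_congr_fun measurableSet_Ioi key, integral_const_mul,
    integral_Ioi_inv_one_add_sq, arctan_zero, sub_zero]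
  ring

noncomputable def F (z u : ℝ) : ℝ := Real.exp (-(z^2/2 * u)) / (1+u)

lemma F_meas : Measurable (Function.uncurry F) := by
  unfold Function.uncurry F; fun_prop

lemma F_nonneg {z u : ℝ} (hu : 0 < u) : 0 ≤ F z u := by
  unfold F; positivity

lemma F_integrable {z : ℝ} (hz : z ≠ 0) : IntegrableOn (F z) (Ioi 0) := by
  have hb : 0 < z^2/2 := by positivity
  have hm : Measurable (F z) := by unfold F; fun_prop
  refine (exp_neg_integrableOn_Ioi 0 hb).mono' hm.aestronglyMeasurable ?_
  filter_upwards [ae_restrict_mem measurableSet_Ioi] with u hu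
  have hu0 : (0:ℝ) < u := hu
  have h1u : (1:ℝ) ≤ 1 + u := by linarith
  unfold F
  rw [norm_div, norm_of_nonneg (Real.exp_nonneg _), norm_of_nonneg (by linarith : (0:ℝ) ≤ 1+u)]
  have : -(z^2/2 * u) = -(z^2/2) * u := by ring
  rw [this]
  exact div_le_of_le_mul₀ (by positivity) (Real.exp_nonneg _)
    (by nlinarith [Real.exp_nonneg (-(z^2/2) * u)])

lemma F_section_integrable {u : ℝ} (hu : 0 < u) : Integrable (fun z => F z u) := by
  have hb : 0 < u/2 := by positivity
  have : (fun z => F z u) = fun z => Real.exp (-(u/2) * z^2) / (1+u) := by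
    funext z; unfold F; ring_nf
  rw [this]
  exact (integrable_exp_neg_mul_sq hb).div_const _

lemma F_section_integral {u : ℝ} (hu : 0 < u) :
    ∫ z, F z u = Real.sqrt (π / (u/2)) / (1+u) := by
  have : (fun z => F z u) = fun z => Real.exp (-(u/2) * z^2) / (1+u) := by
    funext z; unfold F; ring_nf
  rw [this, integral_div, integral_gaussian]

noncomputable def gAux (z : ℝ) : ℝ := ∫ u in Ioi (0:ℝ), F z u

lemma gAux_nonneg (z : ℝ) : 0 ≤ gAux z :=
  setIntegral_nonneg measurableSet_Ioi fun _ hu => F_nonneg hu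

lemma gAux_sm : StronglyMeasurable gAux :=
  F_meas.stronglyMeasurable.integral_prod_right'

lemma ae_ne_zero : ∀ᵐ z : ℝ, z ≠ (0:ℝ) := by
  rw [ae_iff]
  have : {a : ℝ | ¬ a ≠ 0} = {0} := by ext a; simp
  rw [this]
  exact measure_singleton 0

lemma W_eq : EqOn (fun u : ℝ => Real.sqrt (π / (u/2)) / (1+u))
    (fun u : ℝ => Real.sqrt (2*π) * (u ^ (-(1/2):ℝ) / (1+u))) (Ioi 0) := by
  intro u hu
  have hu0 : (0:ℝ) < u := hu
  have h1 : π / (u/2) = (2*π) / u := by field_simp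
  have h2 : Real.sqrt ((2*π)/u) = Real.sqrt (2*π) / Real.sqrt u := by
    rw [Real.sqrt_div (by positivity)]
  have h3 : Real.sqrt u = u ^ ((1:ℝ)/2) := Real.sqrt_eq_rpow u
  have h4 : (u ^ ((1:ℝ)/2))⁻¹ = u ^ (-(1/2):ℝ) := by
    rw [← Real.rpow_neg hu0.le]
  have h5 : (0:ℝ) < u ^ ((1:ℝ)/2) := Real.rpow_pos_of_pos hu0 _
  have h6 : (0:ℝ) < 1 + u := by linarith
  simp only
  rw [h1, h2, h3, ← h4]
  field_simp

lemma W_integrable : IntegrableOn (fun u : ℝ => Real.sqrt (π / (u/2)) / (1+u)) (Ioi 0) :=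
  IntegrableOn.congr_fun (core_integrable.const_mul (Real.sqrt (2*π))) W_eq.symm measurableSet_Ioi

lemma W_value : ∫ u in Ioi (0:ℝ), Real.sqrt (π / (u/2)) / (1+u) = Real.sqrt (2*π) * π := by
  rw [setIntegral_congr_fun measurableSet_Ioi W_eq, integral_const_mul, core_value]

lemma swap_lintegral :
    ∫⁻ z : ℝ, ∫⁻ u in Ioi (0:ℝ), ENNReal.ofReal (F z u)
      = ENNReal.ofReal (Real.sqrt (2*π) * π) := by
  have hmeas : AEMeasurable (Function.uncurry fun z u => ENNReal.ofReal (F z u))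
      ((volume : Measure ℝ).prod (volume.restrict (Ioi (0:ℝ)))) :=
    (ENNReal.measurable_ofReal.comp F_meas).aemeasurable
  rw [lintegral_lintegral_swap hmeas]
  have h1 : ∀ᵐ u ∂(volume.restrict (Ioi (0:ℝ))),
      (∫⁻ z, ENNReal.ofReal (F z u)) = ENNReal.ofReal (Real.sqrt (π/(u/2)) / (1+u)) := by
    filter_upwards [ae_restrict_mem measurableSet_Ioi] with u hu
    rw [← F_section_integral hu,
      ← ofReal_integral_eq_lintegral_ofReal (F_section_integrable hu)
        (ae_of_all _ fun z => F_nonneg hu)]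
  rw [lintegral_congr_ae h1,
    ← ofReal_integral_eq_lintegral_ofReal W_integrable ?_, W_value]
  filter_upwards [ae_restrict_mem measurableSet_Ioi] with u hu
  have hu0 : (0:ℝ) < u := hu
  positivity

lemma integral_gAux : ∫ z, gAux z = Real.sqrt (2*π) * π := by
  rw [integral_eq_lintegral_of_nonneg_ae (ae_of_all _ gAux_nonneg)
    gAux_sm.aestronglyMeasurable]
  have h : ∫⁻ z, ENNReal.ofReal (gAux z)
      = ∫⁻ z : ℝ, ∫⁻ u in Ioi (0:ℝ), ENNReal.ofReal (F z u) := by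
    refine lintegral_congr_ae ?_
    filter_upwards [ae_ne_zero] with z hz
    refine ofReal_integral_eq_lintegral_ofReal (F_integrable hz) ?_
    filter_upwards [ae_restrict_mem measurableSet_Ioi] with u hu
    exact F_nonneg hu
  rw [h, swap_lintegral, ENNReal.toReal_ofReal (by positivity)]

/-- The function `z ↦ (1/(√2 π^{3/2})) e^{z²/2} E₁(z²/2)` integrates to `1` over `ℝ`. -/
theorem normal_product_ratio_2_1_density_integrates_to_one :
    ∫ z : ℝ, (1 / (Real.sqrt 2 * Real.pi ^ ((3 : ℝ) / 2))) *
      (Real.exp (z ^ 2 / 2) * expInt (z ^ 2 / 2)) = 1 := by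
  have hcong : ∀ᵐ z : ℝ, (1 / (Real.sqrt 2 * Real.pi ^ ((3 : ℝ) / 2))) *
      (Real.exp (z ^ 2 / 2) * expInt (z ^ 2 / 2))
      = (1 / (Real.sqrt 2 * Real.pi ^ ((3 : ℝ) / 2))) * gAux z := by
    filter_upwards [ae_ne_zero] with z hz
    have hx : (0:ℝ) < z ^ 2 / 2 := by positivity
    rw [exp_mul_expInt hx]
    rfl
  rw [integral_congr_ae hcong, integral_const_mul, integral_gAux,
    Real.sqrt_mul (by norm_num : (0:ℝ) ≤ 2),
    show ((3:ℝ)/2) = 1 + 1/2 by norm_num, Real.rpow_add pi_pos, Real.rpow_one,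
    ← Real.sqrt_eq_rpow]
  have h2 : (0:ℝ) < Real.sqrt 2 := Real.sqrt_pos.mpr (by norm_num)
  have hp : (0:ℝ) < Real.sqrt π := Real.sqrt_pos.mpr pi_pos
  field_simp
end

section
/- Let a, A > 0 and m ∈ ℝ, and let g : (0,∞) → ℝ satisfy g(x) → 0 as x → ∞. For sufficiently small z > 0, let x(z) be a solution of A x^m e^{-a x}(1 + g(x)) = z with x(z) → ∞ as z → 0. Then x(z) = (1/a) ln(1/z) + (m/a) ln(ln(1/z)) + (1/a) ln(A/a^m) + o(1) as z → 0⁺. -/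
open Real Filter Set
open scoped Topology

/-!
Taking logarithms, `L := log (1/z)` satisfies `L = a x - m log x - log A - log (1 + g x)`, so
`L / x → a` and hence `log (a x / L) → 0`. Solving the same identity for `x` gives exactly
`x - ((1/a) L + (m/a) log L + (1/a) log (A / a^m)) = (m/a) log (a x / L) + (1/a) log (1 + g x)`,
and both terms on the right tend to `0`.
-/

lemma log_one_div_eq_of_mul_rpow_mul_exp_mul_eq {a A m X c z : ℝ} (hA : 0 < A) (hX : 0 < X)
    (hc : 0 < c) (h : A * X ^ m * exp (-(a * X)) * c = z) :
    log (1 / z) = a * X - m * log X - (log A + log c) := by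
  subst h
  rw [one_div, log_inv, log_mul (by positivity) hc.ne', log_mul (by positivity) (exp_ne_zero _),
    log_mul hA.ne' (rpow_pos_of_pos hX m).ne', log_exp, log_rpow hX]
  ring

lemma sub_log_expansion_eq {a A m X L r : ℝ} (ha : 0 < a) (hA : A ≠ 0) (hX : X ≠ 0)
    (hL₀ : L ≠ 0) (hL : L = a * X - m * log X - (log A + r)) :
    X - ((1 / a) * L + (m / a) * log L + (1 / a) * log (A / a ^ m))
      = (m / a) * log (a * X / L) + (1 / a) * r := by
  rw [log_div (mul_ne_zero ha.ne' hX) hL₀, log_mul ha.ne' hX,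
    log_div hA (rpow_pos_of_pos ha m).ne', log_rpow ha, hL]
  field_simp
  ring

section Filter

variable {α : Type*} {l : Filter α} {X L r : α → ℝ}

lemma tendsto_div_of_eventuallyEq_mul_sub_mul_log_sub {a m c : ℝ} (hX : Tendsto X l atTop)
    (hr : Tendsto r l (𝓝 c)) (hL : ∀ᶠ t in l, L t = a * X t - m * log (X t) - r t) :
    Tendsto (fun t => L t / X t) l (𝓝 a) := by
  have hlogX : Tendsto (fun t => log (X t) / X t) l (𝓝 0) :=
    isLittleO_log_id_atTop.tendsto_div_nhds_zero.comp hX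
  have hlim : Tendsto (fun t => a - m * (log (X t) / X t) - r t / X t) l (𝓝 (a - m * 0 - 0)) :=
    (tendsto_const_nhds.sub (hlogX.const_mul m)).sub (hr.div_atTop hX)
  rw [mul_zero, sub_zero, sub_zero] at hlim
  refine hlim.congr' ?_
  filter_upwards [hL, hX.eventually_ne_atTop 0] with t hLt hXt
  rw [hLt]
  field_simp

lemma tendsto_log_mul_div_of_tendsto_div {a : ℝ} (ha : a ≠ 0)
    (h : Tendsto (fun t => L t / X t) l (𝓝 a)) :
    Tendsto (fun t => log (a * X t / L t)) l (𝓝 0) := by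
  have hinv : Tendsto (fun t => a * (L t / X t)⁻¹) l (𝓝 1) := by
    simpa [ha] using (h.inv₀ ha).const_mul a
  simpa [inv_div, mul_div_assoc] using hinv.log one_ne_zero

end Filter

/-- Asymptotics of the solution `x(z)` of `A x^m e^{-ax}(1+g(x)) = z` as `z → 0⁺`:
`x(z) = (1/a) ln(1/z) + (m/a) ln(ln(1/z)) + (1/a) ln(A/a^m) + o(1)`. -/
theorem solution_asymptotics
    (a A m : ℝ) (ha : 0 < a) (hA : 0 < A)
    (g : ℝ → ℝ) (hg : Filter.Tendsto g Filter.atTop (𝓝 0))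
    (x : ℝ → ℝ)
    (hxTop : Filter.Tendsto x (𝓝[>] (0 : ℝ)) Filter.atTop)
    (hsol : ∀ᶠ z in 𝓝[>] (0 : ℝ),
      A * (x z) ^ m * Real.exp (-(a * x z)) * (1 + g (x z)) = z) :
    Filter.Tendsto
      (fun z => x z - ((1 / a) * Real.log (1 / z) + (m / a) * Real.log (Real.log (1 / z))
        + (1 / a) * Real.log (A / a ^ m)))
      (𝓝[>] (0 : ℝ)) (𝓝 0) := by
  have hx : ∀ᶠ z in 𝓝[>] (0 : ℝ), 0 < x z := hxTop.eventually (eventually_gt_atTop 0)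
  have hc : Tendsto (fun z => 1 + g (x z)) (𝓝[>] 0) (𝓝 1) := by
    simpa using (hg.comp hxTop).const_add 1
  have hr : Tendsto (fun z => log (1 + g (x z))) (𝓝[>] 0) (𝓝 0) := by
    simpa using hc.log one_ne_zero
  have hL : ∀ᶠ z in 𝓝[>] (0 : ℝ),
      log (1 / z) = a * x z - m * log (x z) - (log A + log (1 + g (x z))) := by
    filter_upwards [hsol, hx, hc.eventually (eventually_gt_nhds one_pos)] with z hz hxz hcz
    exact log_one_div_eq_of_mul_rpow_mul_exp_mul_eq hA hxz hcz hz
  have hratio : Tendsto (fun z => log (1 / z) / x z) (𝓝[>] 0) (𝓝 a) :=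
    tendsto_div_of_eventuallyEq_mul_sub_mul_log_sub hxTop (hr.const_add (log A)) hL
  have hlim := ((tendsto_log_mul_div_of_tendsto_div ha.ne' hratio).const_mul (m / a)).add
    (hr.const_mul (1 / a))
  rw [mul_zero, mul_zero, add_zero] at hlim
  refine hlim.congr' ?_
  filter_upwards [hL, hx, hratio.eventually_ne ha.ne'] with z hLz hxz hne
  exact (sub_log_expansion_eq ha hA.ne' hxz.ne' (left_ne_zero_of_mul hne) hLz).symm
end
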